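/- arXiv:1505.01548 — 7 statements merged into one kernel-verified Lean document; each statement's English description precedes it below -/
import Mathlib

section
/- Let L = (ℓ_j)_{j≥1} be a fractal string with Minkowski dimension D. Then the abscissa of convergence of its geometric zeta function equals D; that is, inf{ρ ∈ ℝ : Σ_{j≥1} ℓ_j^ρ < ∞} = D. -/
open Filter Topology

/-- A fractal string: a nonincreasing, positive, summable sequence of lengths
`ℓ 0 ≥ ℓ 1 ≥ ⋯ > 0` (indexed from `0`, representing `ℓ_1, ℓ_2, …`). -/
def IsFractalString (ℓ : ℕ → ℝ) : Prop :=
  (∀ j, 0 < ℓ j) ∧ Antitone ℓ ∧ Summable ℓ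

/-- The volume `V(ε) = ∑ⱼ min(ℓⱼ, 2ε)` of the inner ε-neighborhood of the boundary. -/
noncomputable def stringVol (ℓ : ℕ → ℝ) (ε : ℝ) : ℝ :=
  ∑' j, min (ℓ j) (2 * ε)

/-- Upper `d`-dimensional Minkowski content `limsup_{ε→0⁺} V(ε)/ε^{1-d}`. -/
noncomputable def upperContent (ℓ : ℕ → ℝ) (d : ℝ) : ENNReal :=
  Filter.limsup (fun ε : ℝ => ENNReal.ofReal (stringVol ℓ ε / ε ^ (1 - d))) (𝓝[>] 0)

/-- Lower `d`-dimensional Minkowski content `liminf_{ε→0⁺} V(ε)/ε^{1-d}`. -/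
noncomputable def lowerContent (ℓ : ℕ → ℝ) (d : ℝ) : ENNReal :=
  Filter.liminf (fun ε : ℝ => ENNReal.ofReal (stringVol ℓ ε / ε ^ (1 - d))) (𝓝[>] 0)

/-- The Minkowski dimension `D = inf {d ≥ 0 : M*_d < ∞}`. -/
noncomputable def minkDim (ℓ : ℕ → ℝ) : ℝ :=
  sInf {d : ℝ | 0 ≤ d ∧ upperContent ℓ d < ⊤}

/-- The spectral (frequency) counting function `N_ν(x) = ∑ⱼ ⌊ℓⱼ x⌋`. -/
noncomputable def spectralCount (ℓ : ℕ → ℝ) (x : ℝ) : ℝ :=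
  ∑' j, (⌊ℓ j * x⌋₊ : ℝ)

/-- The Weyl term `W(x) = (∑ⱼ ℓⱼ) x`. -/
noncomputable def weylTerm (ℓ : ℕ → ℝ) (x : ℝ) : ℝ :=
  (∑' j, ℓ j) * x

/-- The geometric counting function `N_L(x) = #{j ≥ 1 : ℓⱼ⁻¹ ≤ x}`. -/
noncomputable def geomCount (ℓ : ℕ → ℝ) (x : ℝ) : ℝ :=
  (({j : ℕ | (ℓ j)⁻¹ ≤ x}).ncard : ℝ)

/-- The "asymptotic second term" `φ_ν(x) = W(x) - N_ν(x)`. -/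
noncomputable def phiNu (ℓ : ℕ → ℝ) (x : ℝ) : ℝ :=
  weylTerm ℓ x - spectralCount ℓ x

/-- `L` is Minkowski measurable (in dimension `D`) with Minkowski content `M`:
`V(ε)/ε^{1-D} → M` as `ε → 0⁺`. -/
def MinkMeasurableWith (ℓ : ℕ → ℝ) (D M : ℝ) : Prop :=
  Tendsto (fun ε : ℝ => stringVol ℓ ε / ε ^ (1 - D)) (𝓝[>] (0:ℝ)) (𝓝 M)

/-- `L` is Minkowski measurable in dimension `D` (with some positive finite content). -/
def MinkMeasurable (ℓ : ℕ → ℝ) (D : ℝ) : Prop :=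
  ∃ M : ℝ, 0 < M ∧ MinkMeasurableWith ℓ D M

/-- Hypothesis (6.1): `N_ν(x) = W(x) - C x^D + o(x^D)` as `x → +∞`. -/
def SpectralAsymp (ℓ : ℕ → ℝ) (D C : ℝ) : Prop :=
  Tendsto (fun x : ℝ => (spectralCount ℓ x - (weylTerm ℓ x - C * x ^ D)) / x ^ D)
    atTop (𝓝 0)

/-- The inverse spectral problem `(ISP)_D`: every fractal string of Minkowski
dimension `D` satisfying (6.1) is Minkowski measurable. -/
def ISP (D : ℝ) : Prop :=
  ∀ ℓ : ℕ → ℝ, IsFractalString ℓ → minkDim ℓ = D →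
    (∃ C : ℝ, C ≠ 0 ∧ SpectralAsymp ℓ D C) → MinkMeasurable ℓ D

-- auxiliary lemmas
lemma fs_pos_of_summable_rpow {ℓ : ℕ → ℝ} (h : IsFractalString ℓ) {ρ : ℝ}
    (hs : Summable fun j => ℓ j ^ ρ) : 0 < ρ := by
  by_contra hρ
  push_neg at hρ
  have h1 : Tendsto ℓ atTop (𝓝 0) := h.2.2.tendsto_atTop_zero
  have h2 : ∀ᶠ j in atTop, ℓ j < 1 := h1.eventually_lt_const one_pos
  have h3 : ∀ᶠ j in atTop, (fun j => ℓ j ^ ρ) j < 1 :=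
    hs.tendsto_atTop_zero.eventually_lt_const one_pos
  obtain ⟨j, hj1, hj2⟩ := (h2.and h3).exists
  have : ℓ j ^ (0:ℝ) ≤ ℓ j ^ ρ :=
    Real.rpow_le_rpow_of_exponent_ge (h.1 j) hj1.le hρ
  rw [Real.rpow_zero] at this
  linarith

lemma fs_summable_min {ℓ : ℕ → ℝ} (h : IsFractalString ℓ) (ε : ℝ) (hε : 0 < ε) :
    Summable (fun j => min (ℓ j) (2 * ε)) :=
  Summable.of_nonneg_of_le (fun j => le_min (h.1 j).le (by linarith))
    (fun j => min_le_left _ _) h.2.2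

lemma fs_content_lt_top {ℓ : ℕ → ℝ} (h : IsFractalString ℓ) {ρ : ℝ}
    (h0 : 0 < ρ) (h1 : ρ ≤ 1) (hs : Summable fun j => ℓ j ^ ρ) :
    upperContent ℓ ρ < ⊤ := by
  set S := ∑' j, ℓ j ^ ρ with hS
  have key : ∀ ε : ℝ, 0 < ε → stringVol ℓ ε / ε ^ (1-ρ) ≤ 2^(1-ρ) * S := by
    intro ε hε
    have hmin : ∀ j, min (ℓ j) (2*ε) ≤ ℓ j ^ ρ * (2*ε)^(1-ρ) := by
      intro j
      rcases le_total (ℓ j) (2*ε) with hc | hc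
      · calc min (ℓ j) (2*ε) ≤ ℓ j := min_le_left _ _
          _ = ℓ j ^ ρ * ℓ j ^ (1-ρ) := by
              rw [← Real.rpow_add (h.1 j)]; norm_num
          _ ≤ ℓ j ^ ρ * (2*ε)^(1-ρ) := by
              have := Real.rpow_le_rpow (h.1 j).le hc (by linarith : (0:ℝ) ≤ 1-ρ)
              have h2 := Real.rpow_nonneg (h.1 j).le ρ
              nlinarith
      · calc min (ℓ j) (2*ε) ≤ 2*ε := min_le_right _ _
          _ = (2*ε) ^ ρ * (2*ε)^(1-ρ) := by
              rw [← Real.rpow_add (by positivity)]; norm_num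
          _ ≤ ℓ j ^ ρ * (2*ε)^(1-ρ) := by
              have := Real.rpow_le_rpow (by positivity : (0:ℝ) ≤ 2*ε) hc h0.le
              have h2 := Real.rpow_nonneg (by positivity : (0:ℝ) ≤ 2*ε) (1-ρ)
              nlinarith
    have hV : stringVol ℓ ε ≤ S * (2*ε)^(1-ρ) := by
      rw [stringVol]
      calc ∑' j, min (ℓ j) (2*ε) ≤ ∑' j, ℓ j ^ ρ * (2*ε)^(1-ρ) :=
            Summable.tsum_le_tsum hmin (fs_summable_min h ε hε) (hs.mul_right _)
        _ = S * (2*ε)^(1-ρ) := tsum_mul_right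
    have hpow : (0:ℝ) < ε ^ (1-ρ) := Real.rpow_pos_of_pos hε _
    rw [div_le_iff₀ hpow]
    have hmr : (2*ε)^(1-ρ) = 2^(1-ρ) * ε^(1-ρ) :=
      Real.mul_rpow (by norm_num) hε.le
    rw [hmr] at hV
    nlinarith
  have hub : upperContent ℓ ρ ≤ ENNReal.ofReal (2^(1-ρ) * S) := by
    apply limsup_le_of_le
    · isBoundedDefault
    · filter_upwards [self_mem_nhdsWithin] with ε hε
      exact ENNReal.ofReal_le_ofReal (key ε hε)
  exact hub.trans_lt ENNReal.ofReal_lt_top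

lemma fs_summable_of_content {ℓ : ℕ → ℝ} (h : IsFractalString ℓ) {d ρ : ℝ}
    (hd : 0 ≤ d) (hc : upperContent ℓ d < ⊤) (hρ : d < ρ) :
    Summable fun j => ℓ j ^ ρ := by
  have hBne : upperContent ℓ d + 1 ≠ ⊤ := by
    simp [ENNReal.add_ne_top, hc.ne]
  have hlt : upperContent ℓ d < upperContent ℓ d + 1 :=
    ENNReal.lt_add_right hc.ne one_ne_zero
  have hev := eventually_lt_of_limsup_lt hlt
  set C := (upperContent ℓ d + 1).toReal with hCdef
  have hC : ∀ᶠ ε in 𝓝[>] (0:ℝ), stringVol ℓ ε / ε^(1-d) ≤ C :=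
    hev.mono fun ε hε => (ENNReal.ofReal_le_iff_le_toReal hBne).1 hε.le
  obtain ⟨ε₀, hε₀pos, hball⟩ := ((nhdsGT_basis (0:ℝ)).eventually_iff).1 hC
  have hto : Tendsto ℓ atTop (𝓝 0) := h.2.2.tendsto_atTop_zero
  obtain ⟨J, hJ⟩ := eventually_atTop.1 (hto.eventually_lt_const (by positivity : (0:ℝ) < 2*ε₀))
  -- main pointwise bound
  have hKey : ∀ j, J ≤ j → ((j:ℝ)+1) * ℓ j ^ d ≤ C / 2^(1-d) := by
    intro j hj
    have hℓj := h.1 j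
    have hmem : ℓ j / 2 ∈ Set.Ioo (0:ℝ) ε₀ := ⟨by linarith, by have := hJ j hj; linarith⟩
    have hup : stringVol ℓ (ℓ j / 2) ≤ C * (ℓ j / 2)^(1-d) := by
      have := hball hmem
      have hpow : (0:ℝ) < (ℓ j / 2) ^ (1-d) := Real.rpow_pos_of_pos (by linarith) _
      rw [div_le_iff₀ hpow] at this
      linarith
    have hlow : ((j:ℝ)+1) * ℓ j ≤ stringVol ℓ (ℓ j / 2) := by
      have hsum := Summable.sum_le_tsum (Finset.range (j+1))
        (fun i _ => le_min (h.1 i).le (by linarith : (0:ℝ) ≤ 2 * (ℓ j / 2)))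
        (fs_summable_min h (ℓ j / 2) (by linarith))
      have heq : ∑ i ∈ Finset.range (j+1), min (ℓ i) (2 * (ℓ j / 2))
          = ((j:ℝ)+1) * ℓ j := by
        have : ∀ i ∈ Finset.range (j+1), min (ℓ i) (2 * (ℓ j / 2)) = ℓ j := by
          intro i hi
          have hi' : i ≤ j := Nat.lt_succ_iff.1 (Finset.mem_range.1 hi)
          have : ℓ j ≤ ℓ i := h.2.1 hi'
          rw [min_eq_right (by linarith)]
          ring
        rw [Finset.sum_congr rfl this]
        simp [mul_comm]
      rw [heq] at hsum
      exact hsum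
    -- combine
    have hcomb : ((j:ℝ)+1) * ℓ j ≤ C * (ℓ j / 2)^(1-d) := hlow.trans hup
    have hpowj : (0:ℝ) < ℓ j ^ (1-d) := Real.rpow_pos_of_pos hℓj _
    have h2d : (0:ℝ) < 2^(1-d) := Real.rpow_pos_of_pos two_pos _
    have hdr : (ℓ j / 2)^(1-d) = ℓ j ^(1-d) / 2^(1-d) := Real.div_rpow hℓj.le two_pos.le _
    have hsplit : ℓ j = ℓ j ^ d * ℓ j ^ (1-d) := by
      rw [← Real.rpow_add hℓj]; norm_num
    rw [hdr] at hcomb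
    have hstep : ((j:ℝ)+1) * ℓ j ^ d * ℓ j ^ (1-d) ≤ (C / 2^(1-d)) * ℓ j ^ (1-d) := by
      calc ((j:ℝ)+1) * ℓ j ^ d * ℓ j ^ (1-d) = ((j:ℝ)+1) * ℓ j := by
            rw [mul_assoc, ← hsplit]
        _ ≤ C * (ℓ j ^(1-d) / 2^(1-d)) := hcomb
        _ = (C / 2^(1-d)) * ℓ j ^ (1-d) := by ring
    exact le_of_mul_le_mul_right hstep hpowj
  set K := C / 2^(1-d) with hKdef
  have hK : 0 < K := by
    have h1 := hKey J le_rfl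
    have hJp := h.1 J
    have h2 : (0:ℝ) < ((J:ℝ)+1) * ℓ J ^ d := by positivity
    linarith
  rcases eq_or_lt_of_le hd with hd0 | hd0
  · -- d = 0 : contradiction
    exfalso
    set j := J + ⌈K⌉₊ with hjdef
    have h1 := hKey j (Nat.le_add_right _ _)
    rw [← hd0, Real.rpow_zero, mul_one] at h1
    have h2 : K ≤ (⌈K⌉₊ : ℝ) := Nat.le_ceil K
    have h3 : (⌈K⌉₊:ℝ) ≤ (j:ℝ) := by exact_mod_cast Nat.le_add_left _ _
    linarith
  · -- d > 0
    set p := ρ / d with hpdef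
    have hp : 1 < p := (one_lt_div hd0).2 hρ
    have hbound : ∀ j, J ≤ j → ℓ j ^ ρ ≤ K ^ p * (((j:ℝ)+1) ^ p)⁻¹ := by
      intro j hj
      have hℓj := h.1 j
      have hjpos : (0:ℝ) < (j:ℝ)+1 := by positivity
      have h1 : ℓ j ^ d ≤ K / ((j:ℝ)+1) := by
        rw [le_div_iff₀ hjpos]
        have := hKey j hj
        nlinarith [Real.rpow_nonneg hℓj.le d]
      have hdp : d * p = ρ := by
        rw [hpdef]; field_simp
      have h2 : ℓ j ^ ρ = (ℓ j ^ d) ^ p := by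
        rw [← Real.rpow_mul hℓj.le, hdp]
      calc ℓ j ^ ρ = (ℓ j ^ d) ^ p := h2
        _ ≤ (K / ((j:ℝ)+1)) ^ p :=
            Real.rpow_le_rpow (Real.rpow_nonneg hℓj.le d) h1 (by linarith)
        _ = K ^ p / (((j:ℝ)+1)) ^ p := Real.div_rpow hK.le hjpos.le _
        _ = K ^ p * ((((j:ℝ)+1)) ^ p)⁻¹ := div_eq_mul_inv _ _
    have hsub : Summable (fun n => ℓ (n + J) ^ ρ) := by
      apply Summable.of_nonneg_of_le
        (f := fun n : ℕ => K ^ p * (((n:ℝ)+1) ^ p)⁻¹)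
        (fun n => Real.rpow_nonneg (h.1 _).le _)
      · intro n
        refine (hbound (n + J) (Nat.le_add_left _ _)).trans ?_
        have hle : ((n:ℝ)+1) ^ p ≤ (((n+J:ℕ):ℝ)+1) ^ p := by
          apply Real.rpow_le_rpow (by positivity) ?_ (by linarith)
          push_cast; linarith [Nat.cast_nonneg (α := ℝ) J]
        have hpos : (0:ℝ) < ((n:ℝ)+1) ^ p := Real.rpow_pos_of_pos (by positivity) _
        have hinv : ((((n+J:ℕ):ℝ)+1) ^ p)⁻¹ ≤ (((n:ℝ)+1) ^ p)⁻¹ :=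
          inv_anti₀ hpos hle
        have hKp : (0:ℝ) ≤ K ^ p := Real.rpow_nonneg hK.le _
        exact mul_le_mul_of_nonneg_left hinv hKp
      · apply Summable.mul_left
        have h1 : Summable (fun n : ℕ => (((n:ℝ)) ^ p)⁻¹) :=
          Real.summable_nat_rpow_inv.2 hp
        have h2 := (summable_nat_add_iff 1).2 h1
        refine h2.congr fun n => ?_
        push_cast
        ring_nf
    exact (summable_nat_add_iff J).1 hsub


/-- The abscissa of convergence of the geometric zeta function of
a fractal string equals its Minkowski dimension. -/
theorem abscissa_eq_minkDim (ℓ : ℕ → ℝ) (h : IsFractalString ℓ) :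
    sInf {ρ : ℝ | Summable (fun j => ℓ j ^ ρ)} = minkDim ℓ := by
  set S := {ρ : ℝ | Summable (fun j => ℓ j ^ ρ)} with hSdef
  set T := {d : ℝ | 0 ≤ d ∧ upperContent ℓ d < ⊤} with hTdef
  have h1S : (1:ℝ) ∈ S := by
    show Summable (fun j => ℓ j ^ (1:ℝ))
    simpa [Real.rpow_one] using h.2.2
  have h1T : (1:ℝ) ∈ T := ⟨zero_le_one, fs_content_lt_top h one_pos le_rfl h1S⟩
  have hSlb : ∀ ρ ∈ S, (0:ℝ) < ρ := fun ρ hρ => fs_pos_of_summable_rpow h hρ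
  have hSbdd : BddBelow S := ⟨0, fun ρ hρ => (hSlb ρ hρ).le⟩
  have hTbdd : BddBelow T := ⟨0, fun d hd => hd.1⟩
  rw [minkDim]
  apply le_antisymm
  · apply le_csInf ⟨1, h1T⟩
    intro d hd
    refine le_of_forall_pos_le_add fun δ hδ => ?_
    exact csInf_le hSbdd (fs_summable_of_content h hd.1 hd.2 (by linarith))
  · apply le_csInf ⟨1, h1S⟩
    intro ρ hρ
    have hρ0 := hSlb ρ hρ
    rcases le_or_gt ρ 1 with hle | hlt
    · exact csInf_le hTbdd ⟨hρ0.le, fs_content_lt_top h hρ0 hle hρ⟩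
    · exact (csInf_le hTbdd h1T).trans hlt.le
end

section
/- Let L = (ℓ_j)_{j≥1} be a fractal string of Minkowski dimension D ∈ (0,1). Then L is Minkowski measurable if and only if there exists a constant Λ ∈ (0,∞) such that ℓ_j · j^{1/D} → Λ as j → ∞. In that case the Minkowski content of L is M = 2^{1−D} Λ^D / (1−D). -/
/-!
Write `N(t) = #{j | t ≤ ℓ j}` and `v(t) = ∑ⱼ min (ℓ j) t = V(t/2)`, so that
`v(t) = t N(t) + ∑_{j ≥ N(t)} ℓ j` and `N` is squeezed between difference quotients of `v`.
Inverting the monotone correspondence `j ↦ ℓ j` shows that `ℓ j (j+1)^{1/D} → Λ` iff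
`t^D N(t) → Λ^D`.

If `v(t) ~ K t^{1-D}`, the difference quotient of `v` between `x t` and `t` is asymptotic to
`K (1 - x^{1-D}) / (1 - x) · t^{-D}`; it bounds `N(t)` from above for `x < 1` and from below for
`x > 1`, and letting `x → 1` gives `t^D N(t) → (1 - D) K`. Conversely, comparing the tails of `ℓ`
with those of the telescoping series of `(j+1)^{1-1/D}` gives
`∑_{j ≥ m} ℓ j ~ Λ D/(1-D) · m^{1-1/D}`, and substituting `m = N(t)` yields
`v(t) ~ Λ^D t^{1-D} / (1 - D)`.
-/

open Filter Topology

theorem tendsto_of_squeeze_families {ι α β : Type*} [LinearOrder β] [TopologicalSpace β]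
    [OrderTopology β] {l : Filter α} {l₁ l₂ : Filter ι} [l₁.NeBot] [l₂.NeBot]
    {f : α → β} {u : ι → α → β} {q : ι → β} {L : β}
    (hq₁ : Tendsto q l₁ (𝓝 L)) (hq₂ : Tendsto q l₂ (𝓝 L))
    (hlower : ∀ᶠ i in l₁, Tendsto (u i) l (𝓝 (q i)) ∧ u i ≤ᶠ[l] f)
    (hupper : ∀ᶠ i in l₂, Tendsto (u i) l (𝓝 (q i)) ∧ f ≤ᶠ[l] u i) :
    Tendsto f l (𝓝 L) := by
  refine tendsto_order.2 ⟨fun a ha => ?_, fun b hb => ?_⟩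
  · obtain ⟨i, hai, hui, hle⟩ := ((hq₁.eventually (eventually_gt_nhds ha)).and hlower).exists
    filter_upwards [hui.eventually (eventually_gt_nhds hai), hle] with x hax hx
    exact hax.trans_le hx
  · obtain ⟨i, hib, hui, hle⟩ := ((hq₂.eventually (eventually_lt_nhds hb)).and hupper).exists
    filter_upwards [hui.eventually (eventually_lt_nhds hib), hle] with x hxb hx
    exact hx.trans_lt hxb

theorem tendsto_one_sub_rpow_div_one_sub (r : ℝ) :
    Tendsto (fun x : ℝ => (1 - x ^ r) / (1 - x)) (𝓝[≠] 1) (𝓝 r) := by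
  have hder : HasDerivAt (fun x : ℝ => x ^ r) r 1 := by
    simpa using Real.hasDerivAt_rpow_const (x := 1) (p := r) (Or.inl one_ne_zero)
  refine (hasDerivAt_iff_tendsto_slope.1 hder).congr fun x => ?_
  rw [slope_def_field, Real.one_rpow, ← neg_div_neg_eq, neg_sub, neg_sub]

theorem tendsto_mul_left_nhdsGT_zero {c : ℝ} (hc : 0 < c) :
    Tendsto (c * ·) (𝓝[>] 0) (𝓝[>] 0) :=
  tendsto_iff_comap.2 (comap_mulLeft_nhdsGT_zero hc).ge

theorem tendsto_tsum_nat_add_div {a b : ℕ → ℝ} {Λ : ℝ} (hb : ∀ j, 0 < b j)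
    (hbs : Summable b) (hab : Tendsto (fun j => a j / b j) atTop (𝓝 Λ)) :
    Tendsto (fun m => (∑' j, a (j + m)) / ∑' j, b (j + m)) atTop (𝓝 Λ) := by
  rw [Metric.tendsto_atTop]
  intro ε hε
  obtain ⟨J, hJ⟩ := Metric.tendsto_atTop.1 hab (ε / 2) (half_pos hε)
  refine ⟨J, fun m hm => ?_⟩
  have hbm : Summable (fun j => b (j + m)) := (summable_nat_add_iff m).2 hbs
  have hpos : 0 < ∑' j, b (j + m) := hbm.tsum_pos (fun j => (hb _).le) 0 (hb _)
  have hclose : ∀ j, ‖a (j + m) - Λ * b (j + m)‖ ≤ ε / 2 * b (j + m) := by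
    intro j
    have hj := hJ (j + m) (by omega)
    rw [Real.dist_eq, div_sub' (hb _).ne', abs_div, abs_of_pos (hb _),
      div_lt_iff₀ (hb _)] at hj
    rw [Real.norm_eq_abs, mul_comm Λ]
    exact hj.le
  have hdiff : Summable (fun j => a (j + m) - Λ * b (j + m)) :=
    Summable.of_norm_bounded (hbm.mul_left (ε / 2)) hclose
  have ham : Summable (fun j => a (j + m)) := by
    simpa using hdiff.add (hbm.mul_left Λ)
  have hsum : |∑' j, a (j + m) - Λ * ∑' j, b (j + m)| ≤ ε / 2 * ∑' j, b (j + m) := by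
    rw [← hbm.tsum_mul_left, ← hbm.tsum_mul_left, ← ham.tsum_sub (hbm.mul_left Λ)]
    calc |∑' j, (a (j + m) - Λ * b (j + m))| ≤ ∑' j, ‖a (j + m) - Λ * b (j + m)‖ :=
          norm_tsum_le_tsum_norm hdiff.norm
      _ ≤ ∑' j, ε / 2 * b (j + m) :=
          hdiff.norm.tsum_le_tsum hclose (hbm.mul_left _)
  rw [Real.dist_eq, div_sub' hpos.ne', abs_div, abs_of_pos hpos, div_lt_iff₀ hpos, mul_comm _ Λ]
  linarith [mul_pos hε hpos]

theorem hasSum_sub_succ_of_antitone {f : ℕ → ℝ} (hf : Antitone f)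
    (h0 : Tendsto f atTop (𝓝 0)) : HasSum (fun j => f j - f (j + 1)) (f 0) := by
  rw [hasSum_iff_tendsto_nat_of_nonneg (fun j => sub_nonneg.2 (hf j.le_succ))]
  simp_rw [Finset.sum_range_sub']
  simpa using tendsto_const_nhds.sub h0

theorem tendsto_rpow_sub_rpow_succ_mul (p : ℝ) :
    Tendsto (fun j : ℕ => (((j : ℝ) + 1) ^ (1 - p) - ((j : ℝ) + 2) ^ (1 - p)) * ((j : ℝ) + 1) ^ p)
      atTop (𝓝 (p - 1)) := by
  have hx : Tendsto (fun j : ℕ => 1 + ((j : ℝ) + 1)⁻¹) atTop (𝓝[≠] 1) := by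
    refine tendsto_nhdsWithin_iff.2 ⟨?_, Eventually.of_forall fun j => ?_⟩
    · simpa using (tendsto_const_nhds (x := (1 : ℝ))).add tendsto_one_div_add_atTop_nhds_zero_nat
    · simp only [Set.mem_compl_iff, Set.mem_singleton_iff, add_eq_left]
      positivity
  have hlim := ((tendsto_one_sub_rpow_div_one_sub (1 - p)).comp hx).neg
  rw [neg_sub] at hlim
  refine hlim.congr fun j => ?_
  have hn : (0 : ℝ) < (j : ℝ) + 1 := by positivity
  have h2 : (j : ℝ) + 2 = ((j : ℝ) + 1) * (1 + ((j : ℝ) + 1)⁻¹) := by field_simp; ring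
  have hsplit : ((j : ℝ) + 1) ^ (1 - p) * ((j : ℝ) + 1) ^ p = (j : ℝ) + 1 := by
    rw [← Real.rpow_add hn]; simp
  rw [Function.comp_apply, h2, Real.mul_rpow hn.le (by positivity)]
  generalize (1 + ((j : ℝ) + 1)⁻¹) ^ (1 - p) = y
  rw [show (((j : ℝ) + 1) ^ (1 - p) - ((j : ℝ) + 1) ^ (1 - p) * y) * ((j : ℝ) + 1) ^ p
    = (1 - y) * (((j : ℝ) + 1) ^ (1 - p) * ((j : ℝ) + 1) ^ p) by ring, hsplit]
  field_simp
  ring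

theorem tendsto_tsum_nat_add_div_rpow {a : ℕ → ℝ} {p Λ : ℝ} (hp : 1 < p)
    (ha : Tendsto (fun j : ℕ => a j * ((j : ℝ) + 1) ^ p) atTop (𝓝 Λ)) :
    Tendsto (fun m : ℕ => (∑' j, a (j + m)) / ((m : ℝ) + 1) ^ (1 - p)) atTop
      (𝓝 (Λ / (p - 1))) := by
  set F : ℕ → ℝ := fun j => ((j : ℝ) + 1) ^ (1 - p) with hF
  have hF_anti : Antitone F := fun i j hij =>
    Real.rpow_le_rpow_of_nonpos (by positivity) (by gcongr) (by linarith)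
  have hF_zero : Tendsto F atTop (𝓝 0) := by
    have := (tendsto_rpow_neg_atTop (by linarith : 0 < p - 1)).comp
      (tendsto_atTop_add_const_right _ 1 tendsto_natCast_atTop_atTop)
    simpa [hF, Function.comp_def] using this
  have hb : ∀ j, 0 < F j - F (j + 1) := fun j => by
    simp only [hF, sub_pos, Nat.cast_succ]
    exact Real.rpow_lt_rpow_of_neg (by positivity) (by linarith) (by linarith)
  have htail : ∀ m, HasSum (fun j => F (j + m) - F (j + m + 1)) (F m) := fun m => by
    simpa [add_right_comm] using hasSum_sub_succ_of_antitone
      (fun i j hij => hF_anti (by omega : i + m ≤ j + m)) (hF_zero.comp (tendsto_add_atTop_nat m))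
  have hab : Tendsto (fun j => a j / (F j - F (j + 1))) atTop (𝓝 (Λ / (p - 1))) := by
    refine (ha.div (tendsto_rpow_sub_rpow_succ_mul p) (by linarith)).congr fun j => ?_
    have hpow : (0 : ℝ) < ((j : ℝ) + 1) ^ p := by positivity
    simp only [hF, Pi.div_apply, Nat.cast_succ, add_assoc, one_add_one_eq_two]
    rw [mul_div_mul_right _ _ hpow.ne']
  refine (tendsto_tsum_nat_add_div hb (htail 0).summable hab).congr fun m => ?_
  rw [(htail m).tsum_eq]

/-- For a fractal string, `lengthCount ℓ t = #{j | t ≤ ℓ j}`, i.e. the geometric counting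
function `N_L(1/t)`. -/
noncomputable def lengthCount (ℓ : ℕ → ℝ) (t : ℝ) : ℕ := sInf {j | ℓ j < t}

/-- `truncVol ℓ t = stringVol ℓ (t / 2)`; the scale `t = 2ε` removes the factors of `2`. -/
noncomputable def truncVol (ℓ : ℕ → ℝ) (t : ℝ) : ℝ := ∑' j, min (ℓ j) t

theorem minkMeasurableWith_iff_tendsto_truncVol {ℓ : ℕ → ℝ} {D M : ℝ} :
    MinkMeasurableWith ℓ D M ↔
      Tendsto (fun t => truncVol ℓ t / t ^ (1 - D)) (𝓝[>] 0) (𝓝 (2 ^ (D - 1) * M)) := by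
  set φ := fun t => truncVol ℓ t / t ^ (1 - D)
  have hcomap := tendsto_comap'_iff (m := φ) (f := 𝓝[>] (0 : ℝ)) (g := 𝓝 (2 ^ (D - 1) * M))
    (i := fun ε : ℝ => 2 * ε) (by rw [(mul_left_surjective₀ two_ne_zero).range_eq]; exact univ_mem)
  rw [comap_mulLeft_nhdsGT_zero two_pos] at hcomap
  rw [← hcomap, ← tendsto_const_smul_iff₀ (c := (2 : ℝ) ^ (1 - D)) (by positivity), smul_eq_mul,
    ← mul_assoc, ← Real.rpow_add two_pos, sub_add_sub_cancel, sub_self, Real.rpow_zero, one_mul,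
    MinkMeasurableWith]
  refine tendsto_congr' ?_
  filter_upwards [self_mem_nhdsWithin] with ε (hε : 0 < ε)
  simp only [φ, Function.comp_apply, stringVol, truncVol, smul_eq_mul]
  rw [Real.mul_rpow zero_le_two hε.le]
  field_simp

namespace IsFractalString

variable {ℓ : ℕ → ℝ}

theorem pos (h : IsFractalString ℓ) (j : ℕ) : 0 < ℓ j := h.1 j

theorem antitone (h : IsFractalString ℓ) : Antitone ℓ := h.2.1

theorem summable (h : IsFractalString ℓ) : Summable ℓ := h.2.2

theorem tendsto_nhdsGT_zero (h : IsFractalString ℓ) : Tendsto ℓ atTop (𝓝[>] 0) :=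
  tendsto_nhdsWithin_iff.2 ⟨h.summable.tendsto_atTop_zero, Eventually.of_forall h.pos⟩

theorem lengthCount_le_iff (h : IsFractalString ℓ) {t : ℝ} (ht : 0 < t) {j : ℕ} :
    lengthCount ℓ t ≤ j ↔ ℓ j < t := by
  refine ⟨fun hj => (h.antitone hj).trans_lt ?_, fun hj => Nat.sInf_le hj⟩
  obtain ⟨k, hk⟩ := (h.summable.tendsto_atTop_zero.eventually (eventually_lt_nhds ht)).exists
  exact Nat.sInf_mem (s := {j | ℓ j < t}) ⟨k, hk⟩

theorem lt_lengthCount_iff (h : IsFractalString ℓ) {t : ℝ} (ht : 0 < t) {j : ℕ} :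
    j < lengthCount ℓ t ↔ t ≤ ℓ j := by
  simpa only [not_le, not_lt] using (h.lengthCount_le_iff ht (j := j)).not

theorem tendsto_lengthCount (h : IsFractalString ℓ) :
    Tendsto (lengthCount ℓ) (𝓝[>] 0) atTop := by
  refine tendsto_atTop.2 fun k => ?_
  filter_upwards [Ioc_mem_nhdsGT (h.pos k)] with t ht
  exact ((h.lt_lengthCount_iff ht.1).2 ht.2).le

theorem summable_min (h : IsFractalString ℓ) {t : ℝ} (ht : 0 ≤ t) :
    Summable fun j => min (ℓ j) t :=
  h.summable.of_nonneg_of_le (fun j => le_min (h.pos j).le ht) fun _ => min_le_left _ _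

theorem truncVol_eq (h : IsFractalString ℓ) {t : ℝ} (ht : 0 < t) :
    truncVol ℓ t = t * lengthCount ℓ t + ∑' j, ℓ (j + lengthCount ℓ t) := by
  rw [truncVol, ← (h.summable_min ht.le).sum_add_tsum_nat_add (lengthCount ℓ t)]
  congr 1
  · rw [Finset.sum_congr rfl fun j hj => min_eq_right ((h.lt_lengthCount_iff ht).1
      (Finset.mem_range.1 hj)), Finset.sum_const, Finset.card_range, nsmul_eq_mul, mul_comm]
  · exact tsum_congr fun j => min_eq_left ((h.lengthCount_le_iff ht).1 (Nat.le_add_left _ _)).le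

theorem truncVol_sub (h : IsFractalString ℓ) {s t : ℝ} (hs : 0 ≤ s) (ht : 0 ≤ t) :
    truncVol ℓ t - truncVol ℓ s = ∑' j, (min (ℓ j) t - min (ℓ j) s) :=
  ((h.summable_min ht).tsum_sub (h.summable_min hs)).symm

theorem mul_lengthCount_le_truncVol_sub (h : IsFractalString ℓ) {s t : ℝ} (hs : 0 < s)
    (hst : s ≤ t) : (t - s) * lengthCount ℓ t ≤ truncVol ℓ t - truncVol ℓ s := by
  have ht : 0 < t := hs.trans_le hst
  rw [h.truncVol_sub hs.le ht.le]
  calc (t - s) * lengthCount ℓ t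
      = ∑ j ∈ Finset.range (lengthCount ℓ t), (min (ℓ j) t - min (ℓ j) s) := by
        rw [Finset.sum_congr rfl fun j hj => ?_, Finset.sum_const, Finset.card_range,
          nsmul_eq_mul, mul_comm]
        have htj := (h.lt_lengthCount_iff ht).1 (Finset.mem_range.1 hj)
        rw [min_eq_right htj, min_eq_right (hst.trans htj)]
    _ ≤ ∑' j, (min (ℓ j) t - min (ℓ j) s) :=
        ((h.summable_min ht.le).sub (h.summable_min hs.le)).sum_le_tsum _ fun j _ =>
          sub_nonneg.2 (min_le_min_left _ hst)

theorem truncVol_sub_le_mul_lengthCount (h : IsFractalString ℓ) {s t : ℝ} (hs : 0 < s)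
    (hst : s ≤ t) : truncVol ℓ t - truncVol ℓ s ≤ (t - s) * lengthCount ℓ s := by
  have ht : 0 < t := hs.trans_le hst
  rw [h.truncVol_sub hs.le ht.le, tsum_eq_sum (s := Finset.range (lengthCount ℓ s)) fun _ hj => ?_]
  · calc ∑ j ∈ Finset.range (lengthCount ℓ s), (min (ℓ j) t - min (ℓ j) s)
        ≤ ∑ j ∈ Finset.range (lengthCount ℓ s), (t - s) := Finset.sum_le_sum fun j _ => by
          rcases le_total (ℓ j) s with hjs | hjs
          · rw [min_eq_left hjs, min_eq_left (hjs.trans hst)]; linarith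
          · rw [min_eq_right hjs]; linarith [min_le_right (ℓ j) t]
      _ = (t - s) * lengthCount ℓ s := by
        rw [Finset.sum_const, Finset.card_range, nsmul_eq_mul, mul_comm]
  · have hjs := (h.lengthCount_le_iff hs).1 (not_lt.1 (Finset.mem_range.not.1 hj))
    rw [min_eq_left hjs.le, min_eq_left (hjs.le.trans hst), sub_self]

theorem tendsto_rpow_mul_lengthCount_iff (h : IsFractalString ℓ) {D c : ℝ} (hD : 0 ≤ D) :
    Tendsto (fun t => t ^ D * lengthCount ℓ t) (𝓝[>] 0) (𝓝 c) ↔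
      Tendsto (fun j : ℕ => ℓ j ^ D * ((j : ℝ) + 1)) atTop (𝓝 c) := by
  constructor
  · intro hN
    obtain ⟨r, hr, hr1⟩ : ∃ r : ℕ → ℝ, Tendsto r atTop (𝓝 1) ∧ ∀ j, 1 < r j := by
      refine ⟨fun j => 1 + 1 / ((j : ℝ) + 1), ?_, fun j => lt_add_of_pos_right 1 (by positivity)⟩
      simpa using (tendsto_const_nhds (x := (1 : ℝ))).add tendsto_one_div_add_atTop_nhds_zero_nat
    have hrℓ : Tendsto (fun j => r j * ℓ j) atTop (𝓝[>] 0) :=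
      tendsto_nhdsWithin_iff.2 ⟨by simpa using hr.mul h.summable.tendsto_atTop_zero,
        Eventually.of_forall fun j => mul_pos (by linarith [hr1 j]) (h.pos j)⟩
    have hlower : Tendsto (fun j => (r j * ℓ j) ^ D * lengthCount ℓ (r j * ℓ j) / r j ^ D)
        atTop (𝓝 c) := by
      simpa [Function.comp_def, Pi.div_def] using
        (hN.comp hrℓ).div (hr.rpow_const (Or.inl one_ne_zero)) (by simp)
    refine tendsto_of_tendsto_of_tendsto_of_le_of_le hlower (hN.comp h.tendsto_nhdsGT_zero)
      (fun j => ?_) (fun j => ?_)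
    · have hr0 : 0 < r j := by linarith [hr1 j]
      have hcount : (lengthCount ℓ (r j * ℓ j) : ℝ) ≤ j + 1 := by
        have := (h.lengthCount_le_iff (mul_pos hr0 (h.pos j))).2
          (lt_mul_of_one_lt_left (h.pos j) (hr1 j))
        exact_mod_cast this.trans (Nat.le_add_right j 1)
      rw [Real.mul_rpow hr0.le (h.pos j).le, mul_assoc, mul_div_cancel_left₀ _
        (Real.rpow_pos_of_pos hr0 D).ne']
      exact mul_le_mul_of_nonneg_left hcount (Real.rpow_nonneg (h.pos j).le D)
    · have hcount : j < lengthCount ℓ (ℓ j) := (h.lt_lengthCount_iff (h.pos j)).2 le_rfl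
      exact mul_le_mul_of_nonneg_left (by exact_mod_cast hcount) (Real.rpow_nonneg (h.pos j).le D)
  · intro hseq
    have hN := h.tendsto_lengthCount
    have hlower : Tendsto (fun t => ℓ (lengthCount ℓ t) ^ D * ((lengthCount ℓ t : ℝ) + 1) *
        ((lengthCount ℓ t : ℝ) / ((lengthCount ℓ t : ℝ) + 1))) (𝓝[>] 0) (𝓝 c) := by
      simpa using (hseq.comp hN).mul ((tendsto_natCast_div_add_atTop (1 : ℝ)).comp hN)
    have hupper : Tendsto (fun t => ℓ (lengthCount ℓ t - 1) ^ D *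
        (((lengthCount ℓ t - 1 : ℕ) : ℝ) + 1)) (𝓝[>] 0) (𝓝 c) :=
      hseq.comp ((tendsto_sub_atTop_nat 1).comp hN)
    refine tendsto_of_tendsto_of_tendsto_of_le_of_le' hlower hupper ?_ ?_
    · filter_upwards [self_mem_nhdsWithin] with t (ht : 0 < t)
      have hℓt : ℓ (lengthCount ℓ t) < t := (h.lengthCount_le_iff ht).1 le_rfl
      rw [mul_assoc, mul_div_cancel₀ _ (by positivity)]
      gcongr
      exact (h.pos _).le
    · filter_upwards [self_mem_nhdsWithin, hN.eventually_ge_atTop 1] with t (ht : 0 < t) hN1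
      have htℓ : t ≤ ℓ (lengthCount ℓ t - 1) := (h.lt_lengthCount_iff ht).1 (by omega)
      rw [Nat.cast_sub hN1, Nat.cast_one, sub_add_cancel]
      gcongr

theorem tendsto_rpow_mul_lengthCount_of_truncVol (h : IsFractalString ℓ) {D K : ℝ}
    (hK : Tendsto (fun t => truncVol ℓ t / t ^ (1 - D)) (𝓝[>] 0) (𝓝 K)) :
    Tendsto (fun t => t ^ D * lengthCount ℓ t) (𝓝[>] 0) (𝓝 ((1 - D) * K)) := by
  set u : ℝ → ℝ → ℝ := fun x t => t ^ D * ((truncVol ℓ t - truncVol ℓ (x * t)) / (t - x * t))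
  set q : ℝ → ℝ := fun x => K * ((1 - x ^ (1 - D)) / (1 - x))
  have hq : Tendsto q (𝓝[≠] 1) (𝓝 ((1 - D) * K)) := by
    simpa [q, mul_comm] using (tendsto_one_sub_rpow_div_one_sub (1 - D)).const_mul K
  have hu : ∀ x, 0 < x → x ≠ 1 → Tendsto (u x) (𝓝[>] 0) (𝓝 (q x)) := by
    intro x hx hx1
    have hlim := (hK.sub ((hK.comp (tendsto_mul_left_nhdsGT_zero hx)).const_mul
      (x ^ (1 - D)))).div_const (1 - x)
    rw [show (K - x ^ (1 - D) * K) / (1 - x) = q x by simp only [q]; ring] at hlim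
    refine hlim.congr' ?_
    filter_upwards [self_mem_nhdsWithin] with t (ht : 0 < t)
    have h1x : 1 - x ≠ 0 := sub_ne_zero.2 hx1.symm
    simp only [u, Function.comp_apply]
    rw [Real.mul_rpow hx.le ht.le, Real.rpow_sub ht, Real.rpow_one]
    field_simp
  refine tendsto_of_squeeze_families (u := u) (hq.mono_left (nhdsGT_le_nhdsNE 1))
    (hq.mono_left (nhdsLT_le_nhdsNE 1)) ?_ ?_
  · filter_upwards [self_mem_nhdsWithin] with x (hx : 1 < x)
    refine ⟨hu x (by linarith) hx.ne', ?_⟩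
    filter_upwards [self_mem_nhdsWithin] with t (ht : 0 < t)
    have hxt : t < x * t := lt_mul_of_one_lt_left ht hx
    have hdiff := h.truncVol_sub_le_mul_lengthCount ht hxt.le
    simp only [u]
    gcongr
    rw [← neg_div_neg_eq, neg_sub, neg_sub, div_le_iff₀ (by linarith)]
    linarith
  · filter_upwards [Ioo_mem_nhdsLT one_pos] with x hx
    refine ⟨hu x hx.1 hx.2.ne, ?_⟩
    filter_upwards [self_mem_nhdsWithin] with t (ht : 0 < t)
    have hxt : x * t < t := mul_lt_of_lt_one_left ht hx.2
    have hdiff := h.mul_lengthCount_le_truncVol_sub (mul_pos hx.1 ht) hxt.le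
    simp only [u]
    gcongr
    rw [le_div_iff₀ (by linarith)]
    linarith

theorem tendsto_truncVol_of_tendsto_mul_rpow (h : IsFractalString ℓ) {D Λ : ℝ} (hD0 : 0 < D)
    (hD1 : D < 1) (hΛ : 0 < Λ)
    (hl : Tendsto (fun j : ℕ => ℓ j * ((j : ℝ) + 1) ^ (1 / D)) atTop (𝓝 Λ)) :
    Tendsto (fun t => truncVol ℓ t / t ^ (1 - D)) (𝓝[>] 0) (𝓝 (Λ ^ D / (1 - D))) := by
  have hcount : Tendsto (fun t => t ^ D * lengthCount ℓ t) (𝓝[>] 0) (𝓝 (Λ ^ D)) := by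
    refine (h.tendsto_rpow_mul_lengthCount_iff hD0.le).2
      ((hl.rpow_const (Or.inl hΛ.ne')).congr fun j => ?_)
    rw [Real.mul_rpow (h.pos j).le (by positivity), ← Real.rpow_mul (by positivity),
      one_div_mul_cancel hD0.ne', Real.rpow_one]
  have hcount_succ : Tendsto (fun t => t ^ D * ((lengthCount ℓ t : ℝ) + 1)) (𝓝[>] 0)
      (𝓝 (Λ ^ D)) := by
    have h0 : Tendsto (fun t : ℝ => t ^ D) (𝓝[>] 0) (𝓝 0) := by
      simpa [Real.zero_rpow hD0.ne'] using
        (Real.continuousAt_rpow_const 0 D (Or.inr hD0.le)).tendsto.mono_left nhdsWithin_le_nhds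
    simpa [mul_add] using hcount.add h0
  have htail := (tendsto_tsum_nat_add_div_rpow (one_lt_one_div hD0 hD1) hl).comp
    h.tendsto_lengthCount
  have hlim := hcount.add (htail.mul
    (hcount_succ.rpow_const (p := (D - 1) / D) (Or.inl (by positivity))))
  have hval : Λ ^ D + Λ / (1 / D - 1) * (Λ ^ D) ^ ((D - 1) / D) = Λ ^ D / (1 - D) := by
    have : 1 - D ≠ 0 := by linarith
    rw [← Real.rpow_mul hΛ.le, mul_div_cancel₀ _ hD0.ne', Real.rpow_sub hΛ, Real.rpow_one]
    field_simp
    ring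
  rw [← hval]
  refine hlim.congr' ?_
  filter_upwards [self_mem_nhdsWithin] with t (ht : 0 < t)
  have hexp : 1 - 1 / D = (D - 1) / D := by field_simp
  simp only [Function.comp_apply]
  rw [h.truncVol_eq ht, hexp, Real.mul_rpow (by positivity) (by positivity),
    ← Real.rpow_mul ht.le, mul_div_cancel₀ _ hD0.ne', Real.rpow_sub ht, Real.rpow_sub ht,
    Real.rpow_one]
  field_simp

theorem minkMeasurableWith_of_tendsto_mul_rpow (h : IsFractalString ℓ) {D Λ : ℝ} (hD0 : 0 < D)
    (hD1 : D < 1) (hΛ : 0 < Λ)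
    (hl : Tendsto (fun j : ℕ => ℓ j * ((j : ℝ) + 1) ^ (1 / D)) atTop (𝓝 Λ)) :
    MinkMeasurableWith ℓ D (2 ^ (1 - D) * Λ ^ D / (1 - D)) := by
  rw [minkMeasurableWith_iff_tendsto_truncVol, mul_div_assoc, ← mul_assoc,
    ← Real.rpow_add two_pos, sub_add_sub_cancel, sub_self, Real.rpow_zero, one_mul]
  exact h.tendsto_truncVol_of_tendsto_mul_rpow hD0 hD1 hΛ hl

theorem tendsto_mul_rpow_of_minkMeasurableWith (h : IsFractalString ℓ) {D M : ℝ} (hD : 0 < D)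
    (hM : MinkMeasurableWith ℓ D M) :
    Tendsto (fun j : ℕ => ℓ j * ((j : ℝ) + 1) ^ (1 / D)) atTop
      (𝓝 (((1 - D) * (2 ^ (D - 1) * M)) ^ (1 / D))) := by
  have hseq := (h.tendsto_rpow_mul_lengthCount_iff hD.le).1
    (h.tendsto_rpow_mul_lengthCount_of_truncVol (minkMeasurableWith_iff_tendsto_truncVol.1 hM))
  refine (hseq.rpow_const (Or.inr (one_div_pos.2 hD).le)).congr fun j => ?_
  rw [Real.mul_rpow (Real.rpow_nonneg (h.pos j).le D) (by positivity),
    ← Real.rpow_mul (h.pos j).le, mul_one_div_cancel hD.ne', Real.rpow_one]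

end IsFractalString

theorem minkMeasurable_iff_general (ℓ : ℕ → ℝ) (h : IsFractalString ℓ) (D : ℝ)
    (hD : D ∈ Set.Ioo (0:ℝ) 1) :
    (MinkMeasurable ℓ D ↔
      ∃ Λ : ℝ, 0 < Λ ∧
        Tendsto (fun j : ℕ => ℓ j * ((j : ℝ) + 1) ^ (1 / D)) atTop (𝓝 Λ)) ∧
    (∀ Λ : ℝ, 0 < Λ →
      Tendsto (fun j : ℕ => ℓ j * ((j : ℝ) + 1) ^ (1 / D)) atTop (𝓝 Λ) →
      MinkMeasurableWith ℓ D (2 ^ (1 - D) * Λ ^ D / (1 - D))) := by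
  obtain ⟨hD0, hD1⟩ := hD
  refine ⟨⟨fun ⟨M, hM, hMw⟩ => ⟨_, ?_, h.tendsto_mul_rpow_of_minkMeasurableWith hD0 hMw⟩,
    fun ⟨Λ, hΛ, hl⟩ => ⟨_, ?_, h.minkMeasurableWith_of_tendsto_mul_rpow hD0 hD1 hΛ hl⟩⟩,
    fun Λ hΛ hl => h.minkMeasurableWith_of_tendsto_mul_rpow hD0 hD1 hΛ hl⟩
  · exact Real.rpow_pos_of_pos (mul_pos (by linarith) (by positivity)) _
  · exact div_pos (by positivity) (by linarith)

/-- (Characterization of Minkowski measurability, Lapidus–Pomerance)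
A fractal string of dimension `D ∈ (0,1)` is Minkowski measurable iff
`ℓ_j j^{1/D} → Λ` for some `Λ ∈ (0,∞)`; in that case `M = 2^{1-D} Λ^D/(1-D)`. -/
theorem minkMeasurable_iff (ℓ : ℕ → ℝ) (h : IsFractalString ℓ) (D : ℝ)
    (hD : D ∈ Set.Ioo (0:ℝ) 1) (hdim : minkDim ℓ = D) :
    (MinkMeasurable ℓ D ↔
      ∃ Λ : ℝ, 0 < Λ ∧
        Tendsto (fun j : ℕ => ℓ j * ((j : ℝ) + 1) ^ (1 / D)) atTop (𝓝 Λ)) ∧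
    (∀ Λ : ℝ, 0 < Λ →
      Tendsto (fun j : ℕ => ℓ j * ((j : ℝ) + 1) ^ (1 / D)) atTop (𝓝 Λ) →
      MinkMeasurableWith ℓ D (2 ^ (1 - D) * Λ ^ D / (1 - D))) :=
  minkMeasurable_iff_general ℓ h D hD
end

section
/- Let L = (ℓ_j)_{j≥1} be a fractal string of Minkowski dimension D ∈ (0,1), and set α_* = liminf_{j→∞} ℓ_j · j^{1/D} and α^* = limsup_{j→∞} ℓ_j · j^{1/D}. Then L is Minkowski nondegenerate (i.e., 0 < M_* ≤ M^* < ∞) if and only if 0 < α_* ≤ α^* < ∞. -/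
open Filter Topology

/-! Both sides are compared through two estimates of `V(ε) = ∑ min(ℓ_j, 2ε)`. If `2ε ≤ ℓ_n`,
the first `n + 1` terms are full, so `V(ε) ≥ 2ε (n + 1)`. Conversely, a decay bound
`ℓ_j ≤ B (j + 1)^(-1/D)` gives `∑ᵢ min(t, B (i + 1)^(-1/D)) = O(B^D t^(1-D))`: split the sum
where the two terms cross and compare the tail with `∫ x^(-1/D) dx`. Hence `V(ε) = O(ε^(1-D))`
and `V(ε) ≤ 2εj + O(ℓ_j^(1-D))`. Testing an upper content bound at `ε = ℓ_j / 2` gives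
`(j + 1) ℓ_j^D = O(1)`, and testing a lower content bound at `ε = μ ℓ_j` with `μ` large gives
`(j + 1) ℓ_j^D ≥ 1 / (2μ)`; note `(j + 1) ℓ_j^D = (ℓ_j (j + 1)^(1/D))^D`. -/

open Real Finset

namespace ENNReal

theorem limsup_ofReal_lt_top_iff {α : Type*} {l : Filter α} {f : α → ℝ} :
    limsup (fun x => ENNReal.ofReal (f x)) l < ⊤ ↔ ∃ C : ℝ, ∀ᶠ x in l, f x ≤ C := by
  constructor
  · intro h
    obtain ⟨C, -, hC, -⟩ := ENNReal.lt_iff_exists_real_btwn.mp h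
    exact ⟨C, (eventually_lt_of_limsup_lt hC).mono fun x hx =>
      ((ENNReal.ofReal_lt_ofReal_iff').mp hx).1.le⟩
  · rintro ⟨C, hC⟩
    exact (limsup_le_of_le (by isBoundedDefault)
      (hC.mono fun x hx => ENNReal.ofReal_le_ofReal hx)).trans_lt ENNReal.ofReal_lt_top

theorem liminf_ofReal_pos_iff {α : Type*} {l : Filter α} {f : α → ℝ} :
    0 < liminf (fun x => ENNReal.ofReal (f x)) l ↔ ∃ c > 0, ∀ᶠ x in l, c ≤ f x := by
  constructor
  · intro h
    obtain ⟨c, -, hc, hcl⟩ := ENNReal.lt_iff_exists_real_btwn.mp h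
    exact ⟨c, ENNReal.ofReal_pos.mp hc, (eventually_lt_of_lt_liminf hcl).mono fun x hx =>
      ((ENNReal.ofReal_lt_ofReal_iff').mp hx).1.le⟩
  · rintro ⟨c, hc, hcf⟩
    exact (ENNReal.ofReal_pos.mpr hc).trans_le (le_liminf_of_le (by isBoundedDefault)
      (hcf.mono fun x hx => ENNReal.ofReal_le_ofReal hx))

end ENNReal

theorem upperContent_lt_top_iff {ℓ : ℕ → ℝ} {d : ℝ} :
    upperContent ℓ d < ⊤ ↔ ∃ C : ℝ, ∀ᶠ ε in 𝓝[>] 0, stringVol ℓ ε ≤ C * ε ^ (1 - d) := by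
  refine ENNReal.limsup_ofReal_lt_top_iff.trans (exists_congr fun C => eventually_congr ?_)
  filter_upwards [self_mem_nhdsWithin] with ε hε
  exact div_le_iff₀ (rpow_pos_of_pos hε _)

theorem lowerContent_pos_iff {ℓ : ℕ → ℝ} {d : ℝ} :
    0 < lowerContent ℓ d ↔ ∃ c > 0, ∀ᶠ ε in 𝓝[>] 0, c * ε ^ (1 - d) ≤ stringVol ℓ ε := by
  refine ENNReal.liminf_ofReal_pos_iff.trans (exists_congr fun c => and_congr_right fun _ =>
    eventually_congr ?_)
  filter_upwards [self_mem_nhdsWithin] with ε hε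
  exact le_div_iff₀ (rpow_pos_of_pos hε _)

theorem summable_nat_add_one_rpow_neg {p : ℝ} (hp : 1 < p) :
    Summable fun i : ℕ => ((i : ℝ) + 1) ^ (-p) := by
  simpa using (summable_nat_add_iff 1).mpr (Real.summable_nat_rpow.mpr (neg_lt_neg hp))

theorem tsum_nat_add_one_rpow_neg_le {p : ℝ} (hp : 1 < p) {n : ℕ} (hn : 0 < n) :
    ∑' i : ℕ, ((↑(i + n) : ℝ) + 1) ^ (-p) ≤ (n : ℝ) ^ (1 - p) / (p - 1) := by
  have hn' : (0 : ℝ) < n := Nat.cast_pos.mpr hn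
  refine Real.tsum_le_of_sum_range_le (fun i => by positivity) fun m => ?_
  have hanti : AntitoneOn (fun x : ℝ => x ^ (-p)) (Set.Icc (n : ℝ) (n + m)) :=
    fun x hx y _ hxy => rpow_le_rpow_of_nonpos (hn'.trans_le hx.1) hxy (by linarith)
  have h0 : (0 : ℝ) ∉ Set.uIcc (n : ℝ) (n + m) := by
    rw [Set.uIcc_of_le (by linarith [(Nat.cast_nonneg m : (0 : ℝ) ≤ m)])]
    exact fun h => absurd h.1 (not_le.mpr hn')
  calc ∑ i ∈ range m, ((↑(i + n) : ℝ) + 1) ^ (-p)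
      = ∑ i ∈ range m, ((n : ℝ) + ↑(i + 1)) ^ (-p) := by
        refine sum_congr rfl fun i _ => ?_
        push_cast; ring_nf
    _ ≤ ∫ x in (n : ℝ)..n + m, x ^ (-p) := hanti.sum_le_integral
    _ = (n ^ (1 - p) - (n + m : ℝ) ^ (1 - p)) / (p - 1) := by
        rw [integral_rpow (Or.inr ⟨by linarith, h0⟩), show -p + 1 = 1 - p by ring]
        rw [div_eq_div_iff (by linarith) (by linarith)]; ring
    _ ≤ (n : ℝ) ^ (1 - p) / (p - 1) := by
        gcongr
        exact sub_le_self _ (by positivity)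

theorem tsum_le_of_le_min_mul_rpow_neg {f : ℕ → ℝ} {D t C : ℝ} (hD0 : 0 < D) (hD1 : D < 1)
    (ht : 0 < t) (htC : t ≤ C) (hf0 : ∀ i, 0 ≤ f i)
    (hf : ∀ i, f i ≤ min t (C * ((i : ℝ) + 1) ^ (-(1 / D)))) :
    ∑' i, f i ≤ (2 + 1 / (1 / D - 1)) * C ^ D * t ^ (1 - D) := by
  have hp : 1 < 1 / D := by rw [lt_div_iff₀ hD0]; linarith
  have hC : 0 < C := ht.trans_le htC
  have hsum : Summable f := .of_nonneg_of_le hf0 (fun i => (hf i).trans (min_le_right _ _))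
    ((summable_nat_add_one_rpow_neg hp).mul_left C)
  -- split the sum where `C (i + 1) ^ (-1 / D)` drops below `t`, i.e. near `x = (C / t) ^ D`
  set x := (C / t) ^ D with hx
  have hx1 : 1 ≤ x := one_le_rpow ((one_le_div ht).mpr htC) hD0.le
  set n := ⌈x⌉₊
  have hxn : x ≤ n := Nat.le_ceil x
  have hn2x : (n : ℝ) ≤ 2 * x := by linarith [Nat.ceil_lt_add_one (zero_le_one.trans hx1)]
  have hn : 0 < n := Nat.ceil_pos.mpr (by linarith)
  have head : ∑ i ∈ range n, f i ≤ n * t := by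
    simpa using sum_le_sum fun i (_ : i ∈ range n) => (hf i).trans (min_le_left _ _)
  have tail : ∑' i, f (i + n) ≤ C * (n ^ (1 - 1 / D) / (1 / D - 1)) := calc
    ∑' i, f (i + n) ≤ ∑' i, C * ((↑(i + n) : ℝ) + 1) ^ (-(1 / D)) :=
        ((summable_nat_add_iff n).mpr hsum).tsum_le_tsum (fun i => (hf _).trans (min_le_right _ _))
          (((summable_nat_add_iff n).mpr (summable_nat_add_one_rpow_neg hp)).mul_left C)
    _ = C * ∑' i, ((↑(i + n) : ℝ) + 1) ^ (-(1 / D)) := tsum_mul_left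
    _ ≤ C * (n ^ (1 - 1 / D) / (1 / D - 1)) :=
        mul_le_mul_of_nonneg_left (tsum_nat_add_one_rpow_neg_le hp hn) hC.le
  have hxt : x * t = C ^ D * t ^ (1 - D) := by
    rw [hx, div_rpow hC.le ht.le, rpow_sub ht, rpow_one]
    field_simp
  have hCx : C * x ^ (1 - 1 / D) = C ^ D * t ^ (1 - D) := by
    rw [hx, ← rpow_mul (div_pos hC ht).le, show D * (1 - 1 / D) = -(1 - D) by field_simp; ring,
      rpow_neg (div_pos hC ht).le, div_rpow hC.le ht.le, inv_div, rpow_sub hC, rpow_one]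
    field_simp
  have hnx : C * (n : ℝ) ^ (1 - 1 / D) ≤ C * x ^ (1 - 1 / D) :=
    mul_le_mul_of_nonneg_left (rpow_le_rpow_of_nonpos (by linarith) hxn (by linarith)) hC.le
  rw [← hsum.sum_add_tsum_nat_add n]
  calc ∑ i ∈ range n, f i + ∑' i, f (i + n)
      ≤ 2 * (x * t) + C * x ^ (1 - 1 / D) / (1 / D - 1) := by
        have : C * (n ^ (1 - 1 / D) / (1 / D - 1)) ≤ C * x ^ (1 - 1 / D) / (1 / D - 1) := by
          rw [← mul_div_assoc]; gcongr
        nlinarith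
    _ = (2 + 1 / (1 / D - 1)) * C ^ D * t ^ (1 - D) := by rw [hxt, hCx]; ring

theorem mul_rpow_one_div_eq {ℓ x D : ℝ} (hℓ : 0 ≤ ℓ) (hx : 0 ≤ x) (hD : D ≠ 0) :
    ℓ * x ^ (1 / D) = (x * ℓ ^ D) ^ (1 / D) := by
  rw [mul_rpow hx (rpow_nonneg hℓ D), ← rpow_mul hℓ, mul_one_div_cancel hD, rpow_one, mul_comm]

section StringVol

variable {ℓ : ℕ → ℝ}

theorem le_stringVol (hℓ : IsFractalString ℓ) {ε : ℝ} (hε : 0 ≤ ε) {n : ℕ} (hn : 2 * ε ≤ ℓ n) :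
    (n + 1) * (2 * ε) ≤ stringVol ℓ ε := by
  obtain ⟨hpos, hanti, hsum⟩ := hℓ
  have hmin : ∀ i, 0 ≤ min (ℓ i) (2 * ε) := fun i => le_min (hpos i).le (by linarith)
  have hs : Summable fun i => min (ℓ i) (2 * ε) :=
    .of_nonneg_of_le hmin (fun i => min_le_left _ _) hsum
  calc ((n : ℝ) + 1) * (2 * ε) = ∑ i ∈ range (n + 1), min (ℓ i) (2 * ε) := by
        rw [sum_congr rfl fun i hi => min_eq_right (hn.trans (hanti (Nat.lt_succ_iff.mp
          (mem_range.mp hi))))]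
        simp
    _ ≤ stringVol ℓ ε := hs.sum_le_tsum _ fun i _ => hmin i

theorem stringVol_le_add_tsum (hnonneg : ∀ j, 0 ≤ ℓ j) (hsum : Summable ℓ) {ε : ℝ} (hε : 0 ≤ ε)
    (n : ℕ) : stringVol ℓ ε ≤ n * (2 * ε) + ∑' i, ℓ (i + n) := by
  have hmin : ∀ i, 0 ≤ min (ℓ i) (2 * ε) := fun i => le_min (hnonneg i) (by linarith)
  have hs : Summable fun i => min (ℓ i) (2 * ε) :=
    .of_nonneg_of_le hmin (fun i => min_le_left _ _) hsum
  rw [stringVol, ← hs.sum_add_tsum_nat_add n]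
  refine add_le_add ?_ (((summable_nat_add_iff n).mpr hs).tsum_le_tsum
    (fun i => min_le_left _ _) ((summable_nat_add_iff n).mpr hsum))
  simpa using sum_le_sum fun i (_ : i ∈ range n) => min_le_right (ℓ i) (2 * ε)

theorem exists_forall_le_mul_rpow_neg {D A : ℝ}
    (h : ∀ᶠ j in atTop, ℓ j * ((j : ℝ) + 1) ^ (1 / D) ≤ A) :
    ∃ B, ∀ j, ℓ j ≤ B * ((j : ℝ) + 1) ^ (-(1 / D)) := by
  obtain ⟨B, hB⟩ := (isBoundedUnder_of_eventually_le h).bddAbove_range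
  refine ⟨B, fun j => ?_⟩
  rw [rpow_neg (by positivity), ← div_eq_mul_inv, le_div_iff₀ (by positivity)]
  exact hB ⟨j, rfl⟩

theorem tsum_nat_add_le_of_le_mul_rpow_neg (hℓ : IsFractalString ℓ) {D B : ℝ} (hD0 : 0 < D)
    (hD1 : D < 1) (hb : ∀ j, ℓ j ≤ B * ((j : ℝ) + 1) ^ (-(1 / D))) (n : ℕ) :
    ∑' i, ℓ (i + n) ≤ (2 + 1 / (1 / D - 1)) * B ^ D * ℓ n ^ (1 - D) := by
  obtain ⟨hpos, hanti, -⟩ := hℓ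
  have hB : 0 ≤ B := nonneg_of_mul_nonneg_left ((hpos 0).le.trans (hb 0)) (by positivity)
  have hdecay : ∀ i : ℕ, B * ((i + n : ℕ) + 1 : ℝ) ^ (-(1 / D)) ≤ B * ((i : ℝ) + 1) ^ (-(1 / D)) :=
    fun i => mul_le_mul_of_nonneg_left (rpow_le_rpow_of_nonpos (by positivity) (by simp)
      (by simp [hD0.le])) hB
  refine tsum_le_of_le_min_mul_rpow_neg hD0 hD1 (hpos n) ?_ (fun i => (hpos _).le)
    fun i => le_min (hanti (Nat.le_add_left n i)) ((hb _).trans (hdecay i))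
  have := hdecay 0
  simp only [zero_add, Nat.cast_zero, one_rpow, mul_one] at this
  exact (hb n).trans this

theorem eventually_mul_rpow_le_of_stringVol_le (hℓ : IsFractalString ℓ) {D C : ℝ} (hD : 0 < D)
    (h : ∀ᶠ ε in 𝓝[>] 0, stringVol ℓ ε ≤ C * ε ^ (1 - D)) :
    ∀ᶠ j in atTop, ℓ j * ((j : ℝ) + 1) ^ (1 / D) ≤ (C * 2 ^ (D - 1)) ^ (1 / D) := by
  have hpos := hℓ.1
  have hhalf : Tendsto (fun j => ℓ j / 2) atTop (𝓝[>] 0) := tendsto_nhdsWithin_iff.mpr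
    ⟨by simpa using hℓ.2.2.tendsto_atTop_zero.div_const 2,
      .of_forall fun j => half_pos (hpos j)⟩
  filter_upwards [hhalf.eventually h] with j hj
  have hvol := le_stringVol hℓ (half_pos (hpos j)).le (n := j) (by linarith)
  have hsplit : ℓ j = ℓ j ^ D * ℓ j ^ (1 - D) := by rw [← rpow_add (hpos j)]; simp
  have hcount : ((j : ℝ) + 1) * ℓ j ^ D ≤ C * 2 ^ (D - 1) := by
    refine le_of_mul_le_mul_right ?_ (rpow_pos_of_pos (hpos j) (1 - D))
    calc ((j : ℝ) + 1) * ℓ j ^ D * ℓ j ^ (1 - D) = (j + 1) * (2 * (ℓ j / 2)) := by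
          rw [mul_assoc, ← hsplit]; ring
      _ ≤ C * (ℓ j / 2) ^ (1 - D) := hvol.trans hj
      _ = C * 2 ^ (D - 1) * ℓ j ^ (1 - D) := by
          rw [div_rpow (hpos j).le zero_le_two, div_eq_mul_inv, ← rpow_neg zero_le_two]
          ring_nf
  rw [mul_rpow_one_div_eq (hpos j).le (by positivity) hD.ne']
  exact rpow_le_rpow (mul_nonneg (by positivity) (rpow_nonneg (hpos j).le D)) hcount
    (by positivity)

theorem eventually_stringVol_le_of_le_mul_rpow_neg (hpos : ∀ j, 0 < ℓ j) {D C : ℝ} (hD0 : 0 < D)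
    (hD1 : D < 1) (hb : ∀ j, ℓ j ≤ C * ((j : ℝ) + 1) ^ (-(1 / D))) :
    ∀ᶠ ε in 𝓝[>] 0,
      stringVol ℓ ε ≤ (2 + 1 / (1 / D - 1)) * C ^ D * 2 ^ (1 - D) * ε ^ (1 - D) := by
  have hC : 0 < C := by simpa using (hpos 0).trans_le (hb 0)
  filter_upwards [Ioo_mem_nhdsGT (half_pos hC)] with ε ⟨hε, hεC⟩
  calc stringVol ℓ ε ≤ (2 + 1 / (1 / D - 1)) * C ^ D * (2 * ε) ^ (1 - D) :=
        tsum_le_of_le_min_mul_rpow_neg hD0 hD1 (by positivity) (by linarith)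
          (fun i => le_min (hpos i).le (by positivity))
          fun i => le_min (min_le_right _ _) ((min_le_left _ _).trans (hb i))
    _ = (2 + 1 / (1 / D - 1)) * C ^ D * 2 ^ (1 - D) * ε ^ (1 - D) := by
        rw [mul_rpow zero_le_two hε.le]; ring

theorem eventually_le_stringVol_of_le_mul_rpow (hℓ : IsFractalString ℓ) {D c : ℝ} (hD : 0 < D)
    (hc : 0 < c) (h : ∀ᶠ j in atTop, c ≤ ℓ j * ((j : ℝ) + 1) ^ (1 / D)) :
    ∀ᶠ ε in 𝓝[>] 0, (c / 2) ^ D * ε ^ (1 - D) ≤ stringVol ℓ ε := by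
  obtain ⟨J, hJ⟩ := eventually_atTop.mp h
  have hx : Tendsto (fun ε : ℝ => (c / (2 * ε)) ^ D) (𝓝[>] 0) atTop := by
    refine (tendsto_rpow_atTop hD).comp ((tendsto_inv_nhdsGT_zero.const_mul_atTop
      (half_pos hc)).congr fun ε => ?_)
    field_simp
  filter_upwards [hx.eventually_ge_atTop ((J : ℝ) + 1), self_mem_nhdsWithin] with ε hxJ (hε : 0 < ε)
  set x := (c / (2 * ε)) ^ D
  have hx0 : 0 ≤ x := by positivity
  have hm : J + 1 ≤ ⌊x⌋₊ := Nat.le_floor (by exact_mod_cast hxJ)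
  obtain ⟨n, hn⟩ : ∃ n, ⌊x⌋₊ = n + 1 := ⟨⌊x⌋₊ - 1, by omega⟩
  have hnx : (n : ℝ) + 1 ≤ x := by exact_mod_cast hn ▸ Nat.floor_le hx0
  have hxn : x < 2 * ((n : ℝ) + 1) := by
    have := Nat.lt_floor_add_one x
    rw [hn] at this
    push_cast at this
    linarith [(Nat.cast_nonneg n : (0 : ℝ) ≤ n)]
  have hlong : 2 * ε ≤ ℓ n := by
    have hroot : ((n : ℝ) + 1) ^ (1 / D) ≤ c / (2 * ε) := by
      calc ((n : ℝ) + 1) ^ (1 / D) ≤ x ^ (1 / D) := rpow_le_rpow (by positivity) hnx (by positivity)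
        _ = c / (2 * ε) := by rw [one_div, rpow_rpow_inv (by positivity) hD.ne']
    refine le_of_mul_le_mul_right ?_ (by positivity : (0 : ℝ) < ((n : ℝ) + 1) ^ (1 / D))
    calc 2 * ε * ((n : ℝ) + 1) ^ (1 / D) ≤ c := by
          rwa [le_div_iff₀' (by positivity)] at hroot
      _ ≤ ℓ n * ((n : ℝ) + 1) ^ (1 / D) := hJ n (by omega)
  have hvol := le_stringVol hℓ hε.le hlong
  calc (c / 2) ^ D * ε ^ (1 - D) = x * ε := by
        simp only [x]
        rw [div_rpow hc.le (by positivity), div_rpow hc.le (by positivity),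
          mul_rpow zero_le_two hε.le, rpow_sub hε, rpow_one]
        field_simp
    _ ≤ (n + 1) * (2 * ε) := by nlinarith
    _ ≤ stringVol ℓ ε := hvol

theorem eventually_le_mul_rpow_of_le_stringVol (hℓ : IsFractalString ℓ) {D B c : ℝ} (hD0 : 0 < D)
    (hD1 : D < 1) (hc : 0 < c) (hb : ∀ j, ℓ j ≤ B * ((j : ℝ) + 1) ^ (-(1 / D)))
    (h : ∀ᶠ ε in 𝓝[>] 0, c * ε ^ (1 - D) ≤ stringVol ℓ ε) :
    ∃ a > 0, ∀ᶠ j in atTop, a ≤ ℓ j * ((j : ℝ) + 1) ^ (1 / D) := by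
  have hpos := hℓ.1
  set K := (2 + 1 / (1 / D - 1)) * B ^ D
  have hK : 0 ≤ K := by
    have hB : 0 ≤ B := nonneg_of_mul_nonneg_left ((hpos 0).le.trans (hb 0)) (by positivity)
    have : 0 < 1 / D - 1 := by rw [sub_pos, lt_div_iff₀ hD0]; linarith
    positivity
  -- at `ε = μ ℓ j` the lower bound `c ε^(1-D)` beats the tail estimate by `ℓ j^(1-D)`,
  -- which only the `j` intervals before `ℓ j` can account for
  set μ := ((K + 1) / c) ^ (1 / (1 - D))
  have hμ0 : 0 < μ := by positivity
  have hμ : c * μ ^ (1 - D) = K + 1 := by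
    rw [← rpow_mul (by positivity), one_div_mul_cancel (by linarith), rpow_one]
    field_simp
  have hμℓ : Tendsto (fun j => μ * ℓ j) atTop (𝓝[>] 0) := tendsto_nhdsWithin_iff.mpr
    ⟨by simpa using hℓ.2.2.tendsto_atTop_zero.const_mul μ,
      .of_forall fun j => mul_pos hμ0 (hpos j)⟩
  refine ⟨(1 / (2 * μ)) ^ (1 / D), by positivity, ?_⟩
  filter_upwards [hμℓ.eventually h] with j hj
  have hupper := (stringVol_le_add_tsum (fun i => (hpos i).le) hℓ.2.2
    (mul_pos hμ0 (hpos j)).le j).trans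
    (add_le_add_right (tsum_nat_add_le_of_le_mul_rpow_neg hℓ hD0 hD1 hb j) _)
  have hsplit : ℓ j = ℓ j ^ D * ℓ j ^ (1 - D) := by rw [← rpow_add (hpos j)]; simp
  have hlow : c * (μ * ℓ j) ^ (1 - D) = (K + 1) * ℓ j ^ (1 - D) := by
    rw [mul_rpow hμ0.le (hpos j).le, ← mul_assoc, hμ]
  have hcount : 1 / (2 * μ) ≤ ((j : ℝ) + 1) * ℓ j ^ D := by
    rw [div_le_iff₀ (by positivity)]
    refine le_of_mul_le_mul_right ?_ (rpow_pos_of_pos (hpos j) (1 - D))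
    calc 1 * ℓ j ^ (1 - D) ≤ j * (2 * (μ * ℓ j)) := by linarith
      _ ≤ ((j : ℝ) + 1) * (2 * (μ * ℓ j)) := by
          gcongr
          · exact (mul_pos two_pos (mul_pos hμ0 (hpos j))).le
          · linarith
      _ = ((j : ℝ) + 1) * ℓ j ^ D * (2 * μ) * ℓ j ^ (1 - D) := by
          nth_rw 1 [hsplit]; ring
  rw [mul_rpow_one_div_eq (hpos j).le (by positivity) hD0.ne']
  exact rpow_le_rpow (by positivity) hcount (by positivity)

end StringVol

theorem minkNondegenerate_iff_general (ℓ : ℕ → ℝ) (h : IsFractalString ℓ) (D : ℝ)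
    (hD : D ∈ Set.Ioo (0:ℝ) 1) :
    (0 < lowerContent ℓ D ∧ upperContent ℓ D < ⊤) ↔
    (0 < Filter.liminf
        (fun j : ℕ => ENNReal.ofReal (ℓ j * ((j : ℝ) + 1) ^ (1 / D))) atTop ∧
      Filter.limsup
        (fun j : ℕ => ENNReal.ofReal (ℓ j * ((j : ℝ) + 1) ^ (1 / D))) atTop < ⊤) := by
  obtain ⟨hD0, hD1⟩ := hD
  rw [lowerContent_pos_iff, upperContent_lt_top_iff, ENNReal.liminf_ofReal_pos_iff,
    ENNReal.limsup_ofReal_lt_top_iff]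
  constructor
  · rintro ⟨⟨c, hc, hlow⟩, C, hup⟩
    have hα := eventually_mul_rpow_le_of_stringVol_le h hD0 hup
    obtain ⟨B, hB⟩ := exists_forall_le_mul_rpow_neg hα
    exact ⟨eventually_le_mul_rpow_of_le_stringVol h hD0 hD1 hc hB hlow, _, hα⟩
  · rintro ⟨⟨a, ha, hlow⟩, A, hup⟩
    obtain ⟨B, hB⟩ := exists_forall_le_mul_rpow_neg hup
    exact ⟨⟨_, by positivity, eventually_le_stringVol_of_le_mul_rpow h hD0 ha hlow⟩,
      _, eventually_stringVol_le_of_le_mul_rpow_neg h.1 hD0 hD1 hB⟩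

/-- (Characterization of Minkowski nondegeneracy, Lapidus–Pomerance)
A fractal string of dimension `D ∈ (0,1)` is Minkowski nondegenerate iff
`0 < α_* ≤ α^* < ∞`, where `α_*`, `α^*` are the lower and upper limits of
`ℓ_j j^{1/D}` as `j → ∞`. -/
theorem minkNondegenerate_iff (ℓ : ℕ → ℝ) (h : IsFractalString ℓ) (D : ℝ)
    (hD : D ∈ Set.Ioo (0:ℝ) 1) (hdim : minkDim ℓ = D) :
    (0 < lowerContent ℓ D ∧ upperContent ℓ D < ⊤) ↔
    (0 < Filter.liminf
        (fun j : ℕ => ENNReal.ofReal (ℓ j * ((j : ℝ) + 1) ^ (1 / D))) atTop ∧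
      Filter.limsup
        (fun j : ℕ => ENNReal.ofReal (ℓ j * ((j : ℝ) + 1) ^ (1 / D))) atTop < ⊤) :=
  minkNondegenerate_iff_general ℓ h D hD
end

section
/- Let L = (ℓ_j)_{j≥1} be a fractal string of Minkowski dimension D ∈ (0,1). Set α_* = liminf_{j→∞} ℓ_j · j^{1/D}, α^* = limsup_{j→∞} ℓ_j · j^{1/D}, and, with φ_ν(x) = W(x) − N_ν(x), set δ_* = liminf_{x→+∞} φ_ν(x)/x^D and δ^* = limsup_{x→+∞} φ_ν(x)/x^D. Then 0 < α_* ≤ α^* < ∞ holds if and only if 0 < δ_* ≤ δ^* < ∞ holds. -/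
open Filter Topology

/-!
With `{t}` the fractional part and `T(m) = ∑_{j ≥ m} ℓⱼ`, one has `φ_ν(x) = ∑ⱼ {ℓⱼ x}`, hence
`φ_ν(x) ≤ m + x T(m)` for every `m`, and `x T(m) ≤ φ_ν(x)` as soon as `ℓ_m x < 1`.

If `ℓⱼ ≍ j^{-1/D}`, then `T(m) ≍ m^{1-1/D}` (the upper bound by comparing `T(m)` with `T(2m)`),
and both estimates taken at `m ≍ x^D` give `φ_ν(x) ≍ x^D`.

Conversely, `φ_ν(x) ≲ x^D` at `x = 1/(2ℓ_m)` gives `T(m) ≲ ℓ_m^{1-D}`. Together with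
`m ℓ_{2m} ≤ T(m)` this yields `b_{2m} ≲ b_m^{1-D}` for `b_m = ℓ_m m^{1/D}`, so `b` is bounded.
Finally `x^D ≲ φ_ν(x) ≤ m + x T(m)` at `x ≍ 1/ℓ_m`, where `x T(m)` is then a small multiple of
`x^D`, forces `m ≳ x^D`, i.e. `b_m ≳ 1`.
-/

theorem pos_liminf_and_limsup_lt_top_iff {α : Type*} {l : Filter α} {f : α → ℝ} :
    (0 < liminf (fun x => ENNReal.ofReal (f x)) l ∧
        limsup (fun x => ENNReal.ofReal (f x)) l < ⊤) ↔
      ∃ c C : ℝ, 0 < c ∧ ∀ᶠ x in l, c ≤ f x ∧ f x ≤ C := by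
  constructor
  · rintro ⟨hlo, hhi⟩
    obtain ⟨a, ha0, ha⟩ := exists_between hlo
    obtain ⟨b, hb, hbtop⟩ := exists_between hhi
    refine ⟨a.toReal, b.toReal, ENNReal.toReal_pos ha0.ne' ha.ne_top, ?_⟩
    filter_upwards [eventually_lt_of_lt_liminf ha, eventually_lt_of_limsup_lt hb] with x hxa hxb
    refine ⟨((ENNReal.lt_ofReal_iff_toReal_lt ha.ne_top).1 hxa).le, ?_⟩
    calc f x ≤ (ENNReal.ofReal (f x)).toReal := by
          rw [ENNReal.toReal_ofReal']; exact le_max_left _ _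
      _ ≤ b.toReal := ENNReal.toReal_mono hbtop.ne hxb.le
  · rintro ⟨c, C, hc, hf⟩
    constructor
    · calc (0 : ENNReal) < ENNReal.ofReal c := ENNReal.ofReal_pos.2 hc
        _ ≤ _ := le_liminf_of_le (by isBoundedDefault)
            (hf.mono fun x hx => ENNReal.ofReal_le_ofReal hx.1)
    · calc _ ≤ ENNReal.ofReal C := limsup_le_of_le (by isBoundedDefault)
            (hf.mono fun x hx => ENNReal.ofReal_le_ofReal hx.2)
        _ < ⊤ := ENNReal.ofReal_lt_top

theorem exists_bounds_iff_of_le_of_le_mul {α : Type*} {l : Filter α} {f g : α → ℝ} {κ : ℝ}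
    (hκ : 0 < κ) (hfg : ∀ᶠ x in l, f x ≤ g x ∧ g x ≤ κ * f x) :
    (∃ c C : ℝ, 0 < c ∧ ∀ᶠ x in l, c ≤ f x ∧ f x ≤ C) ↔
      ∃ c C : ℝ, 0 < c ∧ ∀ᶠ x in l, c ≤ g x ∧ g x ≤ C := by
  constructor
  · rintro ⟨c, C, hc, h⟩
    refine ⟨c, κ * C, hc, ?_⟩
    filter_upwards [h, hfg] with x ⟨hcf, hfC⟩ ⟨hfg, hgf⟩
    exact ⟨hcf.trans hfg, hgf.trans (mul_le_mul_of_nonneg_left hfC hκ.le)⟩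
  · rintro ⟨c, C, hc, h⟩
    refine ⟨c / κ, C, div_pos hc hκ, ?_⟩
    filter_upwards [h, hfg] with x ⟨hcg, hgC⟩ ⟨hfg, hgf⟩
    exact ⟨(div_le_iff₀' hκ).2 (hcg.trans hgf), hfg.trans hgC⟩

theorem exists_bounds_div_iff {α : Type*} {l : Filter α} {f g : α → ℝ}
    (hg : ∀ᶠ x in l, 0 < g x) :
    (∃ c C : ℝ, 0 < c ∧ ∀ᶠ x in l, c ≤ f x / g x ∧ f x / g x ≤ C) ↔
      ∃ c C : ℝ, 0 < c ∧ ∀ᶠ x in l, c * g x ≤ f x ∧ f x ≤ C * g x := by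
  refine exists₂_congr fun c C => and_congr_right fun _ => eventually_congr ?_
  filter_upwards [hg] with x hx
  rw [le_div_iff₀ hx, div_le_iff₀ hx]

theorem Int.fract_le_self {R : Type*} [Ring R] [LinearOrder R] [FloorRing R] [IsOrderedRing R]
    {a : R} (ha : 0 ≤ a) : Int.fract a ≤ a := by
  rw [← Int.self_sub_floor]
  exact sub_le_self _ (Int.cast_nonneg (Int.floor_nonneg.2 ha))

theorem exists_nat_lt_le_two_mul {y : ℝ} (hy : 1 ≤ y) : ∃ m : ℕ, y < m ∧ (m : ℝ) ≤ 2 * y :=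
  ⟨⌊y⌋₊ + 1, by push_cast; exact Nat.lt_floor_add_one y,
    by push_cast; linarith [Nat.floor_le (zero_le_one.trans hy)]⟩

theorem rpow_mul_rpow_one_sub {y : ℝ} (hy : 0 < y) (s : ℝ) : y ^ s * y ^ (1 - s) = y := by
  rw [← Real.rpow_add hy, add_sub_cancel, Real.rpow_one]

theorem mul_rpow_rpow_one_sub_one_div {x : ℝ} (hx : 0 < x) {D : ℝ} (hD : D ≠ 0) :
    x * (x ^ D) ^ (1 - 1 / D) = x ^ D := by
  rw [← Real.rpow_mul hx.le, mul_one_sub, mul_one_div_cancel hD]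
  nth_rw 1 [← Real.rpow_one x]
  rw [← Real.rpow_add hx, add_sub_cancel]

theorem inv_mul_rpow_one_sub {a : ℝ} (ha : 0 < a) (D : ℝ) : a⁻¹ * a ^ (1 - D) = a⁻¹ ^ D := by
  rw [Real.inv_rpow ha.le, ← Real.rpow_neg_one, ← Real.rpow_add ha, ← Real.rpow_neg ha.le]
  ring_nf

theorem nonpos_of_tendsto_zero_of_le_two_mul {v : ℕ → ℝ} (hv : Tendsto v atTop (𝓝 0))
    {m : ℕ} (hm : 0 < m) (h : ∀ n, m ≤ n → v n ≤ v (2 * n)) : v m ≤ 0 := by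
  have hpow : ∀ k, v m ≤ v (2 ^ k * m) := by
    intro k
    induction k with
    | zero => simp
    | succ k ih =>
      calc v m ≤ v (2 ^ k * m) := ih
        _ ≤ v (2 * (2 ^ k * m)) := h _ (Nat.le_mul_of_pos_left m (by positivity))
        _ = v (2 ^ (k + 1) * m) := by ring_nf
  have hdiv : Tendsto (fun k => 2 ^ k * m) atTop atTop :=
    tendsto_atTop_mono (fun k => (Nat.lt_two_pow_self).le.trans (Nat.le_mul_of_pos_right _ hm))
      tendsto_id
  exact ge_of_tendsto (hv.comp hdiv) (Eventually.of_forall hpow)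

noncomputable def tailSum (ℓ : ℕ → ℝ) (m : ℕ) : ℝ :=
  ∑' j, ℓ (j + m)

section FractalString

variable {ℓ : ℕ → ℝ}

theorem tailSum_nonneg (h0 : ∀ j, 0 ≤ ℓ j) (m : ℕ) : 0 ≤ tailSum ℓ m :=
  tsum_nonneg fun j => h0 (j + m)

theorem tailSum_eq_sum_add (hsum : Summable ℓ) (m n : ℕ) :
    tailSum ℓ m = ∑ j ∈ Finset.range n, ℓ (j + m) + tailSum ℓ (n + m) := by
  rw [tailSum, ← ((summable_nat_add_iff m).2 hsum).sum_add_tsum_nat_add n, tailSum]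
  simp_rw [add_assoc]

theorem tailSum_le_mul_add_tailSum (hanti : Antitone ℓ) (hsum : Summable ℓ) (m n : ℕ) :
    tailSum ℓ m ≤ n * ℓ m + tailSum ℓ (n + m) := by
  rw [tailSum_eq_sum_add hsum m n]
  gcongr
  calc ∑ j ∈ Finset.range n, ℓ (j + m) ≤ ∑ _j ∈ Finset.range n, ℓ m :=
        Finset.sum_le_sum fun j _ => hanti (Nat.le_add_left m j)
    _ = n * ℓ m := by simp

theorem mul_le_tailSum (h0 : ∀ j, 0 ≤ ℓ j) (hanti : Antitone ℓ) (hsum : Summable ℓ) (m n : ℕ) :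
    n * ℓ (n + m) ≤ tailSum ℓ m := by
  rw [tailSum_eq_sum_add hsum m n]
  calc (n : ℝ) * ℓ (n + m) = ∑ _j ∈ Finset.range n, ℓ (n + m) := by simp
    _ ≤ ∑ j ∈ Finset.range n, ℓ (j + m) :=
        Finset.sum_le_sum fun j hj => hanti (by simp at hj; omega)
    _ ≤ _ := le_add_of_nonneg_right (tailSum_nonneg h0 _)

theorem tendsto_tailSum (ℓ : ℕ → ℝ) : Tendsto (tailSum ℓ) atTop (𝓝 0) :=
  tendsto_sum_nat_add ℓ

theorem tendsto_inv_const_mul_atTop (hpos : ∀ j, 0 < ℓ j) (hℓ : Tendsto ℓ atTop (𝓝 0)) {S : ℝ}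
    (hS : 0 < S) : Tendsto (fun j => (S * ℓ j)⁻¹) atTop atTop := by
  refine tendsto_inv_nhdsGT_zero.comp (tendsto_nhdsWithin_of_tendsto_nhds_of_eventually_within _ ?_
    (Eventually.of_forall fun j => mul_pos hS (hpos j)))
  simpa using hℓ.const_mul S

theorem exists_bounds_mul_add_one_rpow_iff (h0 : ∀ j, 0 ≤ ℓ j) {s : ℝ} (hs : 0 ≤ s) :
    (∃ c C : ℝ, 0 < c ∧ ∀ᶠ j : ℕ in atTop,
        c ≤ ℓ j * ((j : ℝ) + 1) ^ s ∧ ℓ j * ((j : ℝ) + 1) ^ s ≤ C) ↔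
      ∃ c C : ℝ, 0 < c ∧ ∀ᶠ j : ℕ in atTop, c ≤ ℓ j * (j : ℝ) ^ s ∧ ℓ j * (j : ℝ) ^ s ≤ C := by
  refine (exists_bounds_iff_of_le_of_le_mul (by positivity : (0 : ℝ) < 2 ^ s) ?_).symm
  filter_upwards [eventually_ge_atTop 1] with j hj
  have hj' : (1 : ℝ) ≤ j := by exact_mod_cast hj
  have hℓj := h0 j
  refine ⟨by gcongr; linarith, ?_⟩
  calc ℓ j * ((j : ℝ) + 1) ^ s ≤ ℓ j * (2 * j : ℝ) ^ s := by gcongr; linarith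
    _ = 2 ^ s * (ℓ j * (j : ℝ) ^ s) := by rw [Real.mul_rpow zero_le_two (by linarith)]; ring

theorem summable_fract_mul (h0 : ∀ j, 0 ≤ ℓ j) (hsum : Summable ℓ) {x : ℝ} (hx : 0 ≤ x) :
    Summable fun j => Int.fract (ℓ j * x) :=
  (hsum.mul_right x).of_nonneg_of_le (fun _ => Int.fract_nonneg _)
    (fun j => Int.fract_le_self (mul_nonneg (h0 j) hx))

theorem phiNu_eq_tsum_fract (h0 : ∀ j, 0 ≤ ℓ j) (hsum : Summable ℓ) {x : ℝ} (hx : 0 ≤ x) :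
    phiNu ℓ x = ∑' j, Int.fract (ℓ j * x) := by
  have hnn : ∀ j, 0 ≤ ℓ j * x := fun j => mul_nonneg (h0 j) hx
  have hfloor : Summable fun j => (⌊ℓ j * x⌋₊ : ℝ) :=
    (hsum.mul_right x).of_nonneg_of_le (fun _ => Nat.cast_nonneg _)
      (fun j => Nat.floor_le (hnn j))
  rw [phiNu, weylTerm, spectralCount, ← tsum_mul_right, ← (hsum.mul_right x).tsum_sub hfloor]
  exact tsum_congr fun j => by rw [natCast_floor_eq_intCast_floor (hnn j), Int.self_sub_floor]

theorem phiNu_le_add_mul_tailSum (h0 : ∀ j, 0 ≤ ℓ j) (hsum : Summable ℓ) {x : ℝ} (hx : 0 ≤ x)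
    (m : ℕ) : phiNu ℓ x ≤ m + x * tailSum ℓ m := by
  rw [phiNu_eq_tsum_fract h0 hsum hx, ← (summable_fract_mul h0 hsum hx).sum_add_tsum_nat_add m,
    tailSum, ← tsum_mul_left]
  refine add_le_add ?_ ?_
  · calc ∑ j ∈ Finset.range m, Int.fract (ℓ j * x) ≤ ∑ _j ∈ Finset.range m, (1 : ℝ) :=
          Finset.sum_le_sum fun _ _ => (Int.fract_lt_one _).le
      _ = m := by simp
  · refine ((summable_nat_add_iff m).2 (summable_fract_mul h0 hsum hx)).tsum_le_tsum (fun j => ?_)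
      (((summable_nat_add_iff m).2 hsum).mul_left x)
    rw [mul_comm x]
    exact Int.fract_le_self (mul_nonneg (h0 _) hx)

theorem mul_tailSum_le_phiNu (h0 : ∀ j, 0 ≤ ℓ j) (hanti : Antitone ℓ) (hsum : Summable ℓ)
    {x : ℝ} (hx : 0 ≤ x) {m : ℕ} (hm : ℓ m * x < 1) : x * tailSum ℓ m ≤ phiNu ℓ x := by
  rw [phiNu_eq_tsum_fract h0 hsum hx, ← (summable_fract_mul h0 hsum hx).sum_add_tsum_nat_add m,
    tailSum, ← tsum_mul_left]
  have hsmall : ∀ j, Int.fract (ℓ (j + m) * x) = x * ℓ (j + m) := fun j => by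
    rw [Int.fract_eq_self.2 ⟨mul_nonneg (h0 _) hx,
      (mul_le_mul_of_nonneg_right (hanti (Nat.le_add_left m j)) hx).trans_lt hm⟩, mul_comm]
  rw [tsum_congr hsmall]
  exact le_add_of_nonneg_left (Finset.sum_nonneg fun j _ => Int.fract_nonneg _)

theorem tailSum_le_of_mul_rpow_le (h0 : ∀ j, 0 ≤ ℓ j) (hanti : Antitone ℓ) (hsum : Summable ℓ)
    {s C : ℝ} (hs : 1 < s) (h : ∀ᶠ j : ℕ in atTop, ℓ j * (j : ℝ) ^ s ≤ C) :
    ∃ K, 0 ≤ K ∧ ∀ᶠ m : ℕ in atTop, tailSum ℓ m ≤ K * (m : ℝ) ^ (1 - s) := by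
  obtain ⟨M, hM⟩ := eventually_atTop.1 h
  have hC : 0 ≤ C := (mul_nonneg (h0 M) (by positivity)).trans (hM M le_rfl)
  set r : ℝ := 2 ^ (1 - s)
  have hr : r < 1 := Real.rpow_lt_one_of_one_lt_of_neg one_lt_two (by linarith)
  set K := C / (1 - r)
  refine ⟨K, div_nonneg hC (by linarith), ?_⟩
  filter_upwards [eventually_ge_atTop (max M 1)] with m hm
  -- `v n ≤ v (2n)`: the block `∑_{n ≤ j < 2n} ℓ j ≤ C n^(1-s)` equals `K n^(1-s) - K (2n)^(1-s)`.
  set v : ℕ → ℝ := fun n => tailSum ℓ n - K * (n : ℝ) ^ (1 - s)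
  have hv : Tendsto v atTop (𝓝 0) := by
    have hpow := ((tendsto_rpow_neg_atTop (y := s - 1) (by linarith)).comp
      tendsto_natCast_atTop_atTop).const_mul K
    simpa [v, neg_sub] using (tendsto_tailSum ℓ).sub hpow
  have hstep : ∀ n, m ≤ n → v n ≤ v (2 * n) := by
    intro n hn
    have hn0 : (0 : ℝ) < n := by exact_mod_cast (by omega : 0 < n)
    have hblock : n * ℓ n ≤ C * (n : ℝ) ^ (1 - s) := by
      calc n * ℓ n = ℓ n * (n : ℝ) ^ s * (n : ℝ) ^ (1 - s) := by
            rw [mul_assoc, rpow_mul_rpow_one_sub hn0, mul_comm]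
        _ ≤ C * (n : ℝ) ^ (1 - s) := by gcongr; exact hM n (by omega)
    have hdouble : ((2 * n : ℕ) : ℝ) ^ (1 - s) = r * (n : ℝ) ^ (1 - s) := by
      push_cast; exact Real.mul_rpow zero_le_two hn0.le
    have hK : C = K * (1 - r) := (div_mul_cancel₀ C (by linarith)).symm
    have htail := tailSum_le_mul_add_tailSum hanti hsum n n
    rw [← two_mul] at htail
    simp only [v, hdouble]
    rw [hK] at hblock
    linarith
  exact sub_nonpos.1 (nonpos_of_tendsto_zero_of_le_two_mul hv (by omega) hstep)

theorem le_tailSum_of_le_mul_rpow (h0 : ∀ j, 0 ≤ ℓ j) (hanti : Antitone ℓ) (hsum : Summable ℓ)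
    {s c : ℝ} (h : ∀ᶠ j : ℕ in atTop, c ≤ ℓ j * (j : ℝ) ^ s) :
    ∀ᶠ m : ℕ in atTop, c * 2 ^ (-s) * (m : ℝ) ^ (1 - s) ≤ tailSum ℓ m := by
  obtain ⟨M, hM⟩ := eventually_atTop.1 h
  filter_upwards [eventually_ge_atTop (max M 1)] with m hm
  have hm0 : (0 : ℝ) < m := by exact_mod_cast (by omega : 0 < m)
  have hc : c ≤ ℓ (m + m) * (2 ^ s * (m : ℝ) ^ s) := by
    have := hM (m + m) (by omega)
    rwa [show ((m + m : ℕ) : ℝ) = 2 * m by push_cast; ring,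
      Real.mul_rpow zero_le_two hm0.le] at this
  calc c * 2 ^ (-s) * (m : ℝ) ^ (1 - s)
      ≤ ℓ (m + m) * (2 ^ s * (m : ℝ) ^ s) * 2 ^ (-s) * (m : ℝ) ^ (1 - s) := by gcongr
    _ = ℓ (m + m) * ((m : ℝ) ^ s * (m : ℝ) ^ (1 - s)) * (2 ^ s * (2 ^ s)⁻¹) := by
        rw [Real.rpow_neg zero_le_two]; ring
    _ = m * ℓ (m + m) := by
        rw [rpow_mul_rpow_one_sub hm0, mul_inv_cancel₀ (by positivity)]; ring
    _ ≤ tailSum ℓ m := mul_le_tailSum h0 hanti hsum m m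

theorem phiNu_le_of_tailSum_le (h0 : ∀ j, 0 ≤ ℓ j) (hsum : Summable ℓ) {D K : ℝ} (hD : 0 < D)
    (hD1 : D ≤ 1) (hK : 0 ≤ K)
    (h : ∀ᶠ m : ℕ in atTop, tailSum ℓ m ≤ K * (m : ℝ) ^ (1 - 1 / D)) :
    ∀ᶠ x in atTop, phiNu ℓ x ≤ (2 + K) * x ^ D := by
  obtain ⟨M, hM⟩ := eventually_atTop.1 h
  filter_upwards [eventually_gt_atTop 0, (tendsto_rpow_atTop hD).eventually_ge_atTop (max M 1 : ℝ)]
    with x hx hxD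
  obtain ⟨m, hym, hmy⟩ := exists_nat_lt_le_two_mul ((le_max_right _ _).trans hxD)
  have hMm : M ≤ m := by exact_mod_cast ((le_max_left _ _).trans hxD).trans hym.le
  have hexp : 1 - 1 / D ≤ 0 := by rw [sub_nonpos, le_div_iff₀ hD]; linarith
  have hpow : (m : ℝ) ^ (1 - 1 / D) ≤ (x ^ D) ^ (1 - 1 / D) :=
    Real.rpow_le_rpow_of_nonpos (by positivity) hym.le hexp
  calc phiNu ℓ x ≤ m + x * tailSum ℓ m := phiNu_le_add_mul_tailSum h0 hsum hx.le m
    _ ≤ 2 * x ^ D + x * (K * (x ^ D) ^ (1 - 1 / D)) := by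
        gcongr
        exact (hM m hMm).trans (by gcongr)
    _ = (2 + K) * x ^ D := by
        rw [mul_left_comm, mul_rpow_rpow_one_sub_one_div hx hD.ne']; ring

theorem exists_le_phiNu_of_le_tailSum (hpos : ∀ j, 0 < ℓ j) (hanti : Antitone ℓ)
    (hsum : Summable ℓ) {D C k : ℝ} (hD : 0 < D) (hD1 : D ≤ 1)
    (hℓ : ∀ᶠ j : ℕ in atTop, ℓ j * (j : ℝ) ^ (1 / D) ≤ C)
    (hT : ∀ᶠ m : ℕ in atTop, k * (m : ℝ) ^ (1 - 1 / D) ≤ tailSum ℓ m) (hk : 0 < k) :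
    ∃ c, 0 < c ∧ ∀ᶠ x in atTop, c * x ^ D ≤ phiNu ℓ x := by
  obtain ⟨M, hM⟩ := eventually_atTop.1 (hℓ.and hT)
  have hC : 0 < C := (mul_pos (hpos (M + 1)) (by positivity)).trans_le (hM (M + 1) (by omega)).1
  refine ⟨k * (2 * C ^ D) ^ (1 - 1 / D), by positivity, ?_⟩
  have hCx : Tendsto (fun x : ℝ => (C * x) ^ D) atTop atTop :=
    (tendsto_rpow_atTop hD).comp (tendsto_id.const_mul_atTop hC)
  filter_upwards [eventually_gt_atTop 0, hCx.eventually_ge_atTop (max M 1 : ℝ)] with x hx hxD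
  set y := (C * x) ^ D
  -- `m > (C x)^D` forces `ℓ m x < 1`, and `m ≤ 2 (C x)^D` keeps `x m^(1-1/D) ≳ x^D`.
  obtain ⟨m, hym, hmy⟩ := exists_nat_lt_le_two_mul ((le_max_right _ _).trans hxD)
  have hMm : M ≤ m := by exact_mod_cast ((le_max_left _ _).trans hxD).trans hym.le
  have hy : 0 < y := by positivity
  have hm : (0 : ℝ) < m := hy.trans hym
  have hsmall : ℓ m * x < 1 := by
    have hCm : C * x < (m : ℝ) ^ (1 / D) := by
      calc C * x = y ^ (1 / D) := by rw [one_div, Real.rpow_rpow_inv (by positivity) hD.ne']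
        _ < (m : ℝ) ^ (1 / D) := by gcongr
    have := (mul_lt_mul_of_pos_left hCm (hpos m)).trans_le (hM m hMm).1
    nlinarith
  have hexp : 1 - 1 / D ≤ 0 := by rw [sub_nonpos, le_div_iff₀ hD]; linarith
  have hpow : (2 * y) ^ (1 - 1 / D) ≤ (m : ℝ) ^ (1 - 1 / D) :=
    Real.rpow_le_rpow_of_nonpos hm hmy hexp
  calc k * (2 * C ^ D) ^ (1 - 1 / D) * x ^ D
      = k * (2 * C ^ D) ^ (1 - 1 / D) * (x * (x ^ D) ^ (1 - 1 / D)) := by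
        rw [mul_rpow_rpow_one_sub_one_div hx hD.ne']
    _ = x * (k * (2 * y) ^ (1 - 1 / D)) := by
        have hy_eq : y = C ^ D * x ^ D := Real.mul_rpow hC.le hx.le
        rw [hy_eq, ← mul_assoc 2, Real.mul_rpow (x := 2 * C ^ D) (by positivity) (by positivity)]
        ring
    _ ≤ x * tailSum ℓ m := by
        gcongr
        exact (mul_le_mul_of_nonneg_left hpow hk.le).trans (hM m hMm).2
    _ ≤ phiNu ℓ x := mul_tailSum_le_phiNu (fun j => (hpos j).le) hanti hsum hx.le hsmall

theorem tailSum_le_of_phiNu_le (hpos : ∀ j, 0 < ℓ j) (hanti : Antitone ℓ) (hsum : Summable ℓ)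
    {D K : ℝ} (h : ∀ᶠ x in atTop, phiNu ℓ x ≤ K * x ^ D) :
    ∀ᶠ m : ℕ in atTop, tailSum ℓ m ≤ K * 2 ^ (1 - D) * ℓ m ^ (1 - D) := by
  filter_upwards [(tendsto_inv_const_mul_atTop hpos hsum.tendsto_atTop_zero two_pos).eventually h]
    with m hm
  set a := 2 * ℓ m
  have ha : 0 < a := mul_pos two_pos (hpos m)
  have hsmall : ℓ m * a⁻¹ < 1 := by
    rw [mul_inv_lt_iff₀ ha]; linarith [hpos m]
  have hx := (mul_tailSum_le_phiNu (fun j => (hpos j).le) hanti hsum (inv_nonneg.2 ha.le)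
    hsmall).trans hm
  rw [← inv_mul_rpow_one_sub ha, mul_left_comm] at hx
  have ha_pow : a ^ (1 - D) = 2 ^ (1 - D) * ℓ m ^ (1 - D) :=
    Real.mul_rpow zero_le_two (hpos m).le
  rw [mul_assoc, ← ha_pow]
  exact le_of_mul_le_mul_left hx (inv_pos.2 ha)

theorem exists_le_of_le_mul_rpow_div_two {b : ℕ → ℝ} {A p : ℝ} (hb : ∀ n, 0 ≤ b n) (hA : 0 ≤ A)
    (hp0 : 0 ≤ p) (hp1 : p < 1) {M : ℕ} (h : ∀ m, 2 * M < m → b m ≤ A * b (m / 2) ^ p) :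
    ∃ B, ∀ m, M ≤ m → b m ≤ B := by
  set B := max ((Finset.range (2 * M + 1)).sup' Finset.nonempty_range_add_one b)
    (max A 1 ^ (1 - p)⁻¹)
  have hB1 : 1 ≤ B := le_max_of_le_right (Real.one_le_rpow (le_max_right _ _) (by
    rw [inv_nonneg]; linarith))
  -- `A ≤ B^(1-p)` makes `[0, B]` invariant under `t ↦ A t^p`.
  have hAB : A * B ^ p ≤ B := by
    have hA_le : A ≤ B ^ (1 - p) :=
      calc A ≤ max A 1 := le_max_left _ _
        _ = (max A 1 ^ (1 - p)⁻¹) ^ (1 - p) :=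
            (Real.rpow_inv_rpow (zero_le_one.trans (le_max_right _ _)) (by linarith)).symm
        _ ≤ B ^ (1 - p) := Real.rpow_le_rpow (Real.rpow_nonneg (zero_le_one.trans
            (le_max_right _ _)) _) (le_max_right _ _) (by linarith)
    calc A * B ^ p ≤ B ^ (1 - p) * B ^ p := by gcongr
      _ = B := by rw [← Real.rpow_add (by linarith), sub_add_cancel, Real.rpow_one]
  refine ⟨B, fun m => ?_⟩
  induction m using Nat.strong_induction_on with
  | _ m ih =>
    intro hm
    rcases le_or_gt m (2 * M) with hle | hlt
    · exact (Finset.le_sup' b (Finset.mem_range.2 (by omega))).trans (le_max_left _ _)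
    · calc b m ≤ A * b (m / 2) ^ p := h m hlt
        _ ≤ A * B ^ p := by
            gcongr
            · exact hb _
            · exact ih _ (by omega) (by omega)
        _ ≤ B := hAB

theorem exists_mul_rpow_le_of_tailSum_le (hpos : ∀ j, 0 < ℓ j) (hanti : Antitone ℓ)
    (hsum : Summable ℓ) {D A : ℝ} (hD : 0 < D) (hD1 : D ≤ 1)
    (h : ∀ᶠ m : ℕ in atTop, tailSum ℓ m ≤ A * ℓ m ^ (1 - D)) :
    ∃ B, ∀ᶠ m : ℕ in atTop, ℓ m * (m : ℝ) ^ (1 / D) ≤ B := by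
  have h0 : ∀ j, 0 ≤ ℓ j := fun j => (hpos j).le
  obtain ⟨M, hM⟩ := eventually_atTop.1 h
  have hA : 0 ≤ A := le_of_mul_le_mul_right
    ((zero_mul _).trans_le ((tailSum_nonneg h0 M).trans (hM M le_rfl)))
    (Real.rpow_pos_of_pos (hpos M) _)
  set b : ℕ → ℝ := fun n => ℓ n * (n : ℝ) ^ (1 / D)
  have hstep : ∀ m, 2 * max M 1 < m → b m ≤ 3 ^ (1 / D) * A * b (m / 2) ^ (1 - D) := by
    intro m hm
    set n := m / 2
    have hn : (0 : ℝ) < n := by exact_mod_cast (by omega : 0 < n)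
    have hmn : (m : ℝ) ≤ 3 * n := by exact_mod_cast (by omega : m ≤ 3 * n)
    have hblock : n * ℓ m ≤ A * ℓ n ^ (1 - D) :=
      calc n * ℓ m ≤ n * ℓ (n + n) := by gcongr; exact hanti (by omega)
        _ ≤ tailSum ℓ n := mul_le_tailSum h0 hanti hsum n n
        _ ≤ A * ℓ n ^ (1 - D) := hM n (by omega)
    have hpow : (n : ℝ) ^ (1 / D) = n * ((n : ℝ) ^ (1 / D)) ^ (1 - D) := by
      rw [← Real.rpow_mul hn.le, show 1 / D * (1 - D) = 1 / D - 1 by field_simp,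
        Real.rpow_sub_one hn.ne']
      field_simp
    calc b m ≤ ℓ m * (3 * n : ℝ) ^ (1 / D) := by
          show ℓ m * (m : ℝ) ^ (1 / D) ≤ _
          have := h0 m
          gcongr
      _ = 3 ^ (1 / D) * ((n : ℝ) ^ (1 / D)) ^ (1 - D) * (n * ℓ m) := by
          rw [Real.mul_rpow (by norm_num) hn.le]
          linear_combination (ℓ m * 3 ^ (1 / D)) * hpow
      _ ≤ 3 ^ (1 / D) * ((n : ℝ) ^ (1 / D)) ^ (1 - D) * (A * ℓ n ^ (1 - D)) := by gcongr
      _ = 3 ^ (1 / D) * A * b n ^ (1 - D) := by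
          rw [Real.mul_rpow (h0 n) (by positivity)]; ring
  obtain ⟨B, hB⟩ := exists_le_of_le_mul_rpow_div_two (fun n => mul_nonneg (h0 n) (by positivity))
    (by positivity) (by linarith) (by linarith) hstep
  exact ⟨B, eventually_atTop.2 ⟨max M 1, hB⟩⟩

theorem exists_le_mul_rpow_of_le_phiNu (hpos : ∀ j, 0 < ℓ j) (hsum : Summable ℓ) {D c A : ℝ}
    (hD : 0 < D) (hD1 : D < 1) (hc : 0 < c) (hφ : ∀ᶠ x in atTop, c * x ^ D ≤ phiNu ℓ x)
    (hT : ∀ᶠ m : ℕ in atTop, tailSum ℓ m ≤ A * ℓ m ^ (1 - D)) :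
    ∃ η, 0 < η ∧ ∀ᶠ n : ℕ in atTop, η ≤ ℓ n * (n : ℝ) ^ (1 / D) := by
  obtain ⟨S, hS, hSpos⟩ : ∃ S, A * S ^ (D - 1) ≤ c / 2 ∧ 0 < S := by
    have : Tendsto (fun S : ℝ => A * S ^ (D - 1)) atTop (𝓝 0) := by
      simpa [neg_sub] using (tendsto_rpow_neg_atTop (y := 1 - D) (by linarith)).const_mul A
    exact ((this.eventually (eventually_le_nhds (half_pos hc))).and (eventually_gt_atTop 0)).exists
  refine ⟨(c / 2) ^ (1 / D) / S, by positivity, ?_⟩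
  -- At `x = (S ℓ_n)⁻¹` the tail contributes at most `(c/2) x^D` to `φ(x) ≤ n + x T(n)`.
  have hinv := tendsto_inv_const_mul_atTop hpos hsum.tendsto_atTop_zero hSpos
  filter_upwards [hinv.eventually hφ, hT] with n hn hTn
  set a := S * ℓ n
  have ha : 0 < a := mul_pos hSpos (hpos n)
  have ha_pow : a ^ (1 - D) = S ^ (1 - D) * ℓ n ^ (1 - D) := Real.mul_rpow hSpos.le (hpos n).le
  have hSS : S ^ (D - 1) * S ^ (1 - D) = 1 := by
    rw [← Real.rpow_add hSpos, sub_add_sub_cancel', sub_self, Real.rpow_zero]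
  have htail : a⁻¹ * tailSum ℓ n ≤ c / 2 * a⁻¹ ^ D :=
    calc a⁻¹ * tailSum ℓ n ≤ a⁻¹ * (A * ℓ n ^ (1 - D)) := by gcongr
      _ = A * S ^ (D - 1) * (a⁻¹ * a ^ (1 - D)) := by
          rw [ha_pow]; linear_combination (-(a⁻¹ * A * ℓ n ^ (1 - D))) * hSS
      _ = A * S ^ (D - 1) * a⁻¹ ^ D := by rw [inv_mul_rpow_one_sub ha]
      _ ≤ c / 2 * a⁻¹ ^ D := by gcongr
  have hn_ge : c / 2 * a⁻¹ ^ D ≤ n := by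
    linarith [phiNu_le_add_mul_tailSum (fun j => (hpos j).le) hsum (inv_nonneg.2 ha.le) n]
  calc (c / 2) ^ (1 / D) / S = (c / 2 * a⁻¹ ^ D) ^ (1 / D) * ℓ n := by
        rw [Real.mul_rpow (by positivity) (by positivity), one_div,
          Real.rpow_rpow_inv (by positivity) hD.ne', mul_inv, div_eq_mul_inv]
        field_simp [(hpos n).ne']
    _ ≤ (n : ℝ) ^ (1 / D) * ℓ n := by
        gcongr
        exact (hpos n).le
    _ = ℓ n * (n : ℝ) ^ (1 / D) := mul_comm _ _

end FractalString

theorem alpha_iff_delta_general (ℓ : ℕ → ℝ) (h : IsFractalString ℓ) (D : ℝ)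
    (hD : D ∈ Set.Ioo (0:ℝ) 1) :
    (0 < Filter.liminf
        (fun j : ℕ => ENNReal.ofReal (ℓ j * ((j : ℝ) + 1) ^ (1 / D))) atTop ∧
      Filter.limsup
        (fun j : ℕ => ENNReal.ofReal (ℓ j * ((j : ℝ) + 1) ^ (1 / D))) atTop < ⊤) ↔
    (0 < Filter.liminf
        (fun x : ℝ => ENNReal.ofReal (phiNu ℓ x / x ^ D)) atTop ∧
      Filter.limsup
        (fun x : ℝ => ENNReal.ofReal (phiNu ℓ x / x ^ D)) atTop < ⊤) := by
  obtain ⟨hpos, hanti, hsum⟩ := h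
  obtain ⟨hD0, hD1⟩ := hD
  have h0 : ∀ j, 0 ≤ ℓ j := fun j => (hpos j).le
  rw [pos_liminf_and_limsup_lt_top_iff, pos_liminf_and_limsup_lt_top_iff,
    exists_bounds_mul_add_one_rpow_iff h0 (by positivity),
    exists_bounds_div_iff ((tendsto_rpow_atTop hD0).eventually_gt_atTop 0)]
  constructor
  · rintro ⟨c, C, hc, hbd⟩
    obtain ⟨K, hK, hT⟩ := tailSum_le_of_mul_rpow_le h0 hanti hsum (one_lt_one_div hD0 hD1)
      (hbd.mono fun _ => And.right)
    obtain ⟨c', hc', hφ⟩ := exists_le_phiNu_of_le_tailSum hpos hanti hsum hD0 hD1.le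
      (hbd.mono fun _ => And.right)
      (le_tailSum_of_le_mul_rpow h0 hanti hsum (hbd.mono fun _ => And.left)) (by positivity)
    exact ⟨c', 2 + K, hc', hφ.and (phiNu_le_of_tailSum_le h0 hsum hD0 hD1.le hK hT)⟩
  · rintro ⟨c, K, hc, hbd⟩
    have hT := tailSum_le_of_phiNu_le hpos hanti hsum (hbd.mono fun _ => And.right)
    obtain ⟨B, hB⟩ := exists_mul_rpow_le_of_tailSum_le hpos hanti hsum hD0 hD1.le hT
    obtain ⟨η, hη, hηle⟩ :=
      exists_le_mul_rpow_of_le_phiNu hpos hsum hD0 hD1 hc (hbd.mono fun _ => And.left) hT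
    exact ⟨η, B, hη, hηle.and hB⟩

/-- For a fractal string of dimension `D ∈ (0,1)`,
`0 < α_* ≤ α^* < ∞` holds iff `0 < δ_* ≤ δ^* < ∞` holds, where `α_*, α^*` are the
lower/upper limits of `ℓ_j j^{1/D}` and `δ_*, δ^*` those of `φ_ν(x)/x^D` with
`φ_ν(x) = W(x) - N_ν(x)`. -/
theorem alpha_iff_delta (ℓ : ℕ → ℝ) (h : IsFractalString ℓ) (D : ℝ)
    (hD : D ∈ Set.Ioo (0:ℝ) 1) (hdim : minkDim ℓ = D) :
    (0 < Filter.liminf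
        (fun j : ℕ => ENNReal.ofReal (ℓ j * ((j : ℝ) + 1) ^ (1 / D))) atTop ∧
      Filter.limsup
        (fun j : ℕ => ENNReal.ofReal (ℓ j * ((j : ℝ) + 1) ^ (1 / D))) atTop < ⊤) ↔
    (0 < Filter.liminf
        (fun x : ℝ => ENNReal.ofReal (phiNu ℓ x / x ^ D)) atTop ∧
      Filter.limsup
        (fun x : ℝ => ENNReal.ofReal (phiNu ℓ x / x ^ D)) atTop < ⊤) :=
  alpha_iff_delta_general ℓ h D hD
end

section
/- Let L = (ℓ_j)_{j≥1} be a fractal string of Minkowski dimension D ∈ (0,1) with finite upper Minkowski content, M^* = M*_D < ∞. Then the spectral counting function satisfies the remainder estimate N_ν(x) = W(x) + O(x^D) as x → +∞; that is, there is a constant C > 0 such that 0 ≤ W(x) − N_ν(x) ≤ C x^D for all sufficiently large x. -/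
open Filter Topology

/-- (Sharp error estimate, `N = 1` case of [Lap1]) If a fractal
string of dimension `D ∈ (0,1)` has finite upper Minkowski content, then
`N_ν(x) = W(x) + O(x^D)` as `x → +∞`, with `0 ≤ W(x) - N_ν(x)`. -/
theorem weyl_remainder_estimate (ℓ : ℕ → ℝ) (h : IsFractalString ℓ) (D : ℝ)
    (hD : D ∈ Set.Ioo (0:ℝ) 1) (hdim : minkDim ℓ = D)
    (hfin : upperContent ℓ D < ⊤) :
    ∃ C : ℝ, 0 < C ∧ ∀ᶠ x : ℝ in atTop,
      0 ≤ weylTerm ℓ x - spectralCount ℓ x ∧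
      weylTerm ℓ x - spectralCount ℓ x ≤ C * x ^ D := by
  obtain ⟨hpos, hanti, hsum⟩ := h
  obtain ⟨hD0, hD1⟩ := hD
  -- Step 1: from finiteness of the upper content, get an eventual bound on V(ε)/ε^(1-D)
  obtain ⟨K, hK1, hK2⟩ := exists_between hfin
  have hKtop : K ≠ ⊤ := hK2.ne
  have hev : ∀ᶠ ε in 𝓝[>] (0:ℝ), stringVol ℓ ε / ε ^ (1 - D) < K.toReal := by
    have hlt := Filter.eventually_lt_of_limsup_lt hK1
    filter_upwards [hlt, self_mem_nhdsWithin] with ε hε hεpos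
    have hε0 : (0:ℝ) < ε := hεpos
    have hnn : 0 ≤ stringVol ℓ ε / ε ^ (1 - D) := by
      apply div_nonneg
      · exact tsum_nonneg fun j => le_min (hpos j).le (by positivity)
      · positivity
    exact (ENNReal.ofReal_lt_iff_lt_toReal hnn hKtop).mp hε
  -- Step 2: key pointwise bound 0 ≤ W - N ≤ x * V(1/(2x)) for x > 0
  have key : ∀ x : ℝ, 0 < x →
      0 ≤ weylTerm ℓ x - spectralCount ℓ x ∧
      weylTerm ℓ x - spectralCount ℓ x ≤ x * stringVol ℓ (1/(2*x)) := by
    intro x hx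
    have hsx : Summable (fun j => ℓ j * x) := hsum.mul_right x
    have hfl : ∀ j, (⌊ℓ j * x⌋₊ : ℝ) ≤ ℓ j * x := fun j =>
      Nat.floor_le (by have := (hpos j).le; positivity)
    have hsf : Summable (fun j => (⌊ℓ j * x⌋₊ : ℝ)) :=
      hsx.of_nonneg_of_le (fun j => by positivity) hfl
    have hW : weylTerm ℓ x = ∑' j, ℓ j * x := tsum_mul_right.symm
    have hdiff : weylTerm ℓ x - spectralCount ℓ x
        = ∑' j, (ℓ j * x - (⌊ℓ j * x⌋₊ : ℝ)) := by
      rw [hW, spectralCount, Summable.tsum_sub hsx hsf]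
    constructor
    · rw [hdiff]
      exact tsum_nonneg fun j => sub_nonneg.mpr (hfl j)
    · rw [hdiff]
      have hmin : ∀ j, ℓ j * x - (⌊ℓ j * x⌋₊ : ℝ) ≤ min (ℓ j * x) 1 := by
        intro j
        refine le_min ?_ ?_
        · have : (0:ℝ) ≤ (⌊ℓ j * x⌋₊ : ℝ) := Nat.cast_nonneg _
          linarith
        · have := Nat.lt_floor_add_one (ℓ j * x)
          linarith
      have hsmin : Summable (fun j => min (ℓ j * x) 1) :=
        hsx.of_nonneg_of_le
          (fun j => le_min (by have := (hpos j).le; positivity) zero_le_one)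
          (fun j => min_le_left _ _)
      calc ∑' j, (ℓ j * x - (⌊ℓ j * x⌋₊ : ℝ)) ≤ ∑' j, min (ℓ j * x) 1 :=
            Summable.tsum_le_tsum hmin (hsx.sub hsf) hsmin
        _ = x * stringVol ℓ (1/(2*x)) := by
            rw [stringVol, ← tsum_mul_left]
            congr 1
            ext j
            have h2 : (2:ℝ) * (1/(2*x)) = 1/x := by field_simp
            rw [h2, mul_min_of_nonneg _ _ hx.le, mul_comm x, mul_one_div, div_self hx.ne']
  -- Step 3: combine
  refine ⟨(K.toReal + 1) * 2 ^ (D - 1), by positivity, ?_⟩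
  have htend : Tendsto (fun x : ℝ => 1 / (2 * x)) atTop (𝓝[>] (0:ℝ)) := by
    rw [tendsto_nhdsWithin_iff]
    constructor
    · have h1 : Tendsto (fun x : ℝ => 2 * x) atTop atTop :=
        Tendsto.const_mul_atTop two_pos tendsto_id
      simpa [Function.comp_def, one_div, mul_inv, mul_comm] using tendsto_inv_atTop_zero.comp h1
    · filter_upwards [eventually_gt_atTop (0:ℝ)] with x hx
      have : (0:ℝ) < 1 / (2 * x) := by positivity
      exact this
  have hev2 : ∀ᶠ x : ℝ in atTop,
      stringVol ℓ (1/(2*x)) / (1/(2*x)) ^ (1 - D) < K.toReal := htend.eventually hev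
  filter_upwards [hev2, eventually_gt_atTop (0:ℝ)] with x hx1 hx0
  obtain ⟨h1, h2⟩ := key x hx0
  refine ⟨h1, h2.trans ?_⟩
  have hεpos : (0:ℝ) < 1/(2*x) := by positivity
  have hp : (0:ℝ) < (1/(2*x)) ^ (1 - D) := Real.rpow_pos_of_pos hεpos _
  have hV : stringVol ℓ (1/(2*x)) ≤ K.toReal * (1/(2*x)) ^ (1 - D) := by
    calc stringVol ℓ (1/(2*x))
        = stringVol ℓ (1/(2*x)) / (1/(2*x)) ^ (1 - D) * (1/(2*x)) ^ (1 - D) := by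
          field_simp
      _ ≤ K.toReal * (1/(2*x)) ^ (1 - D) :=
          mul_le_mul_of_nonneg_right hx1.le hp.le
  have h2x : (0:ℝ) < 2 * x := by positivity
  have e1 : ((1:ℝ)/(2*x)) ^ (1 - D) = 2 ^ (D - 1) * x ^ (D - 1) := by
    rw [one_div, Real.inv_rpow h2x.le, ← Real.rpow_neg h2x.le,
      show -(1 - D) = D - 1 by ring, Real.mul_rpow two_pos.le hx0.le]
  have hxx : x ^ D = x ^ (D - 1) * x := by
    have := Real.rpow_add_one hx0.ne' (D - 1)
    simpa [sub_add_cancel] using this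
  calc x * stringVol ℓ (1/(2*x)) ≤ x * (K.toReal * (1/(2*x)) ^ (1 - D)) :=
        mul_le_mul_of_nonneg_left hV hx0.le
    _ ≤ (K.toReal + 1) * 2 ^ (D - 1) * x ^ D := by
        rw [e1, hxx]
        have p1 : (0:ℝ) < (2:ℝ) ^ (D - 1) := Real.rpow_pos_of_pos two_pos _
        have p2 : (0:ℝ) < x ^ (D - 1) := Real.rpow_pos_of_pos hx0 _
        have p3 : (0:ℝ) ≤ K.toReal := ENNReal.toReal_nonneg
        nlinarith [mul_pos (mul_pos p1 p2) hx0]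
end

section
/- Let L = (ℓ_j)_{j≥1} be a fractal string and let s ∈ ℂ with Re(s) > 1. Then the double series Σ_{j≥1} Σ_{n≥1} (n · ℓ_j^{−1})^{−s} over the frequencies n · ℓ_j^{−1} of L converges absolutely, and its sum equals ζ(s) · Σ_{j≥1} ℓ_j^s, where ζ is the Riemann zeta function; i.e., the spectral zeta function of L factors as ζ_ν(s) = ζ(s) · ζ_L(s). -/
open Filter Topology

/-! The frequency `(n + 1) ℓⱼ⁻¹` contributes `ℓⱼ^s · (n + 1)^{-s}`, so the double series is the
product of `ζ_L(s)` and the Dirichlet series of `ζ(s)`. Both converge absolutely for `Re s > 1`: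
the second is a `p`-series, and the first is dominated by `∑ ℓⱼ` because `ℓⱼ ≤ 1` eventually. -/

theorem Summable.rpow_of_one_le {ι : Type*} {f : ι → ℝ} (hf₀ : ∀ i, 0 ≤ f i) (hf : Summable f)
    {p : ℝ} (hp : 1 ≤ p) : Summable fun i => f i ^ p := by
  refine hf.of_norm_bounded_eventually ?_
  filter_upwards [hf.tendsto_cofinite_zero.eventually (eventually_le_nhds one_pos)] with i hi
  rw [Real.norm_of_nonneg (Real.rpow_nonneg (hf₀ i) p)]
  exact Real.rpow_le_self_of_le_one (hf₀ i) hi hp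

theorem summable_norm_ofReal_cpow {ι : Type*} {f : ι → ℝ} (hf₀ : ∀ i, 0 ≤ f i)
    (hf : Summable f) {s : ℂ} (hs : 1 ≤ s.re) : Summable fun i => ‖((f i : ℝ) : ℂ) ^ s‖ := by
  have hs₀ : s.re ≠ 0 := by linarith
  simpa only [Complex.norm_cpow_eq_rpow_re_of_nonneg (hf₀ _) hs₀] using hf.rpow_of_one_le hf₀ hs

theorem summable_norm_one_div_nat_add_one_cpow {s : ℂ} (hs : 1 < s.re) :
    Summable fun n : ℕ => ‖1 / ((n : ℂ) + 1) ^ s‖ := by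
  rw [summable_norm_iff]
  exact_mod_cast (summable_nat_add_iff 1).mpr (Complex.summable_one_div_nat_cpow.mpr hs)

theorem ofReal_mul_inv_cpow_neg {x ℓ : ℝ} (hx : 0 ≤ x) (hℓ : 0 ≤ ℓ) (s : ℂ) :
    (((x * ℓ⁻¹ : ℝ) : ℂ)) ^ (-s) = (ℓ : ℂ) ^ s * (1 / (x : ℂ) ^ s) := by
  rw [Complex.ofReal_mul, Complex.mul_cpow_ofReal_nonneg hx (inv_nonneg.mpr hℓ),
    Complex.ofReal_inv, Complex.inv_cpow_ofReal_nonneg hℓ, Complex.cpow_neg, Complex.cpow_neg,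
    inv_inv, mul_comm, one_div]

/-- (Factorization of the spectral zeta function) For a fractal
string `L` and `Re(s) > 1`, the series `∑_{j,n} (n ℓ_j⁻¹)^{-s}` over the
frequencies converges absolutely and `ζ_ν(s) = ζ(s) ζ_L(s)`. -/
theorem spectral_zeta_factorization (ℓ : ℕ → ℝ) (h : IsFractalString ℓ)
    (s : ℂ) (hs : 1 < s.re) :
    Summable (fun p : ℕ × ℕ =>
      (((((p.2 : ℝ) + 1) * (ℓ p.1)⁻¹ : ℝ) : ℂ)) ^ (-s)) ∧
    (∑' p : ℕ × ℕ, (((((p.2 : ℝ) + 1) * (ℓ p.1)⁻¹ : ℝ) : ℂ)) ^ (-s)) =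
      riemannZeta s * ∑' j : ℕ, ((ℓ j : ℝ) : ℂ) ^ s := by
  obtain ⟨hpos, -, hsum⟩ := h
  have hterm : (fun p : ℕ × ℕ => (((((p.2 : ℝ) + 1) * (ℓ p.1)⁻¹ : ℝ) : ℂ)) ^ (-s)) =
      fun p => ((ℓ p.1 : ℝ) : ℂ) ^ s * (1 / ((p.2 : ℂ) + 1) ^ s) := by
    ext p
    rw [ofReal_mul_inv_cpow_neg (by positivity) (hpos p.1).le]
    simp only [Complex.ofReal_add, Complex.ofReal_natCast, Complex.ofReal_one]
  have hL := summable_norm_ofReal_cpow (fun j => (hpos j).le) hsum hs.le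
  have hζ := summable_norm_one_div_nat_add_one_cpow hs
  rw [hterm]
  -- elaborated without the expected type: unifying `f x.1 * g x.2` against the goal times out
  refine ⟨(summable_mul_of_summable_norm hL hζ :), ?_⟩
  rw [← tsum_mul_tsum_of_summable_norm hL hζ, ← zeta_eq_tsum_one_div_nat_add_one_cpow hs, mul_comm]
end

section
/- Let N ≥ 1, let A be a nonempty bounded subset of ℝ^N, and let D ∈ [0, N) be such that A is Minkowski measurable of dimension D with Minkowski content M ∈ (0,∞), i.e., lim_{t→0⁺} |A_t| / t^{N−D} = M. Then for every δ > 0, the residue of the tube zeta function at s = D is M in the following sense: lim_{s→D⁺, s real} (s − D) · ∫_0^δ t^{s−N−1} |A_t| dt = M. -/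
/-!
Writing `|A_t| = t ^ (N - D) * g t` with `g t → M`, and `σ = s - D`, the quantity in question is
`σ * ∫_0^δ t ^ (σ - 1) * g t dt`. This is an Abelian limit: the kernel `σ * t ^ (σ - 1)` on
`(0, δ)` has total mass `δ ^ σ → 1` and concentrates at `t = 0` as `σ → 0⁺` (its mass on
`[ε, δ)` is `O(σ)`), so the limit is `lim_{t → 0⁺} g t = M`. Away from `0`, `g` is locally
integrable because `t ↦ |A_t|` is monotone and finite.
-/

open Filter Topology MeasureTheory Metric Set

theorem integral_Ioo_rpow_sub_one {σ ε : ℝ} (hσ : 0 < σ) (hε : 0 ≤ ε) :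
    ∫ t in Ioo 0 ε, t ^ (σ - 1) = ε ^ σ / σ := by
  rw [← integral_Ioc_eq_integral_Ioo, ← intervalIntegral.integral_of_le hε,
    integral_rpow (Or.inl (by linarith)), sub_add_cancel, Real.zero_rpow hσ.ne', sub_zero]

theorem integrableOn_Ioo_rpow_sub_one {σ : ℝ} (hσ : 0 < σ) (ε : ℝ) :
    IntegrableOn (fun t : ℝ => t ^ (σ - 1)) (Ioo 0 ε) :=
  (intervalIntegral.intervalIntegrable_rpow' (by linarith)).def'.mono_set
    (Ioo_subset_Ioc_self.trans Ioc_subset_uIoc)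

section Abelian

variable {g : ℝ → ℝ} {σ ε δ : ℝ}

theorem integrableOn_Ioo_rpow_sub_one_mul {C : ℝ} (hσ : 0 < σ) (hε : 0 < ε)
    (hgC : ∀ t ∈ Ioo 0 ε, |g t| ≤ C) (hg : LocallyIntegrableOn g (Ioi 0)) :
    IntegrableOn (fun t => t ^ (σ - 1) * g t) (Ioo 0 δ) := by
  have hrpow : ContinuousOn (fun t : ℝ => t ^ (σ - 1)) (Ioi 0) :=
    fun t ht => (Real.continuousAt_rpow_const _ _ (Or.inl (ne_of_gt ht))).continuousWithinAt
  have hhead : IntegrableOn (fun t => t ^ (σ - 1) * g t) (Ioo 0 ε) := by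
    refine Integrable.mono' ((integrableOn_Ioo_rpow_sub_one hσ ε).const_mul C) ?_ ?_
    · exact ((hrpow.mono Ioo_subset_Ioi_self).aestronglyMeasurable measurableSet_Ioo).mul
        (hg.aestronglyMeasurable.mono_set Ioo_subset_Ioi_self)
    · refine (ae_restrict_iff' measurableSet_Ioo).2 (ae_of_all _ fun t ht => ?_)
      rw [norm_mul, Real.norm_of_nonneg (Real.rpow_nonneg ht.1.le _), Real.norm_eq_abs, mul_comm]
      exact mul_le_mul_of_nonneg_right (hgC t ht) (Real.rpow_nonneg ht.1.le _)
  have hsub : Icc ε δ ⊆ Ioi 0 := fun t ht => hε.trans_le ht.1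
  have htail : IntegrableOn (fun t => t ^ (σ - 1) * g t) (Icc ε δ) :=
    (hg.integrableOn_compact_subset hsub isCompact_Icc).continuousOn_mul (hrpow.mono hsub)
      isCompact_Icc
  refine (hhead.union htail).mono_set fun t ht => ?_
  rcases lt_or_ge t ε with htε | htε
  exacts [Or.inl ⟨ht.1, htε⟩, Or.inr ⟨htε, ht.2.le⟩]

theorem abs_mul_integral_rpow_sub_one_mul_le {η : ℝ} (hσ : 0 < σ) (hσ1 : σ ≤ 1) (hε : 0 < ε)
    (hε1 : ε ≤ 1) (hεδ : ε ≤ δ) (hgη : ∀ t ∈ Ioo 0 ε, |g t| ≤ η)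
    (hg : LocallyIntegrableOn g (Ioi 0)) :
    |σ * ∫ t in Ioo 0 δ, t ^ (σ - 1) * g t| ≤
      η + σ * (ε⁻¹ * ∫ t in Ico ε δ, |g t|) := by
  have hη : 0 ≤ η := (abs_nonneg _).trans (hgη (ε / 2) ⟨by linarith, by linarith⟩)
  have hint := integrableOn_Ioo_rpow_sub_one_mul (δ := δ) hσ hε hgη hg
  have hhead : |∫ t in Ioo 0 ε, t ^ (σ - 1) * g t| ≤ η * (ε ^ σ / σ) := by
    rw [← integral_Ioo_rpow_sub_one hσ hε.le, ← integral_const_mul, ← Real.norm_eq_abs]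
    refine norm_integral_le_of_norm_le ((integrableOn_Ioo_rpow_sub_one hσ ε).const_mul η)
      ((ae_restrict_iff' measurableSet_Ioo).2 (ae_of_all _ fun t ht => ?_))
    rw [norm_mul, Real.norm_of_nonneg (Real.rpow_nonneg ht.1.le _), Real.norm_eq_abs, mul_comm]
    exact mul_le_mul_of_nonneg_right (hgη t ht) (Real.rpow_nonneg ht.1.le _)
  have htail : |∫ t in Ico ε δ, t ^ (σ - 1) * g t| ≤ ε⁻¹ * ∫ t in Ico ε δ, |g t| := by
    rw [← integral_const_mul, ← Real.norm_eq_abs]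
    have hgint : IntegrableOn g (Ico ε δ) :=
      hg.integrableOn_compact_subset (fun t ht => hε.trans_le ht.1) isCompact_Icc
        |>.mono_set Ico_subset_Icc_self
    refine norm_integral_le_of_norm_le (hgint.abs.const_mul _)
      ((ae_restrict_iff' measurableSet_Ico).2 (ae_of_all _ fun t ht => ?_))
    have ht0 : 0 < t := hε.trans_le ht.1
    rw [norm_mul, Real.norm_of_nonneg (Real.rpow_nonneg ht0.le _), Real.norm_eq_abs]
    refine mul_le_mul_of_nonneg_right ?_ (abs_nonneg _)
    calc t ^ (σ - 1) ≤ ε ^ (σ - 1) := Real.rpow_le_rpow_of_nonpos hε ht.1 (by linarith)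
      _ ≤ ε ^ (-1 : ℝ) := Real.rpow_le_rpow_of_exponent_ge hε hε1 (by linarith)
      _ = ε⁻¹ := Real.rpow_neg_one ε
  rw [← Ioo_union_Ico_eq_Ioo hε hεδ,
    setIntegral_union (Ico_disjoint_Ico_same.mono_left Ioo_subset_Ico_self) measurableSet_Ico
      (hint.mono_set (Ioo_subset_Ioo_right hεδ)) (hint.mono_set (Ico_subset_Ioo_left hε)),
    mul_add]
  calc _ ≤ |σ * ∫ t in Ioo 0 ε, t ^ (σ - 1) * g t| + |σ * ∫ t in Ico ε δ, t ^ (σ - 1) * g t| :=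
        abs_add_le _ _
    _ = σ * |∫ t in Ioo 0 ε, t ^ (σ - 1) * g t| + σ * |∫ t in Ico ε δ, t ^ (σ - 1) * g t| := by
        rw [abs_mul, abs_mul, abs_of_pos hσ]
    _ ≤ σ * (η * (ε ^ σ / σ)) + σ * (ε⁻¹ * ∫ t in Ico ε δ, |g t|) := by gcongr
    _ = η * ε ^ σ + σ * (ε⁻¹ * ∫ t in Ico ε δ, |g t|) := by field_simp
    _ ≤ η + σ * (ε⁻¹ * ∫ t in Ico ε δ, |g t|) := by
        gcongr
        exact mul_le_of_le_one_right hη (Real.rpow_le_one hε.le hε1 hσ.le)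

theorem tendsto_mul_integral_rpow_sub_one_mul_of_tendsto_zero (hδ : 0 < δ)
    (hg0 : Tendsto g (𝓝[>] 0) (𝓝 0)) (hg : LocallyIntegrableOn g (Ioi 0)) :
    Tendsto (fun σ => σ * ∫ t in Ioo 0 δ, t ^ (σ - 1) * g t) (𝓝[>] 0) (𝓝 0) := by
  refine Metric.tendsto_nhds.2 fun η hη => ?_
  obtain ⟨ε, ⟨hε, hεu⟩, hsub⟩ :=
    (mem_nhdsGT_iff_exists_mem_Ioc_Ioo_subset (lt_min one_pos hδ)).1
      (hg0 (closedBall_mem_nhds 0 (half_pos hη)))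
  have hgη : ∀ t ∈ Ioo 0 ε, |g t| ≤ η / 2 := fun t ht => by
    simpa [Real.dist_eq] using hsub ht
  set L := ε⁻¹ * ∫ t in Ico ε δ, |g t|
  have hL : Tendsto (fun σ => σ * L) (𝓝[>] 0) (𝓝 0) := by
    simpa using ((continuous_mul_const L).tendsto 0).mono_left nhdsWithin_le_nhds
  filter_upwards [Ioc_mem_nhdsGT one_pos, hL.eventually (gt_mem_nhds (half_pos hη))]
    with σ hσ hσL
  rw [Real.dist_eq, sub_zero]
  calc _ ≤ η / 2 + σ * L :=
        abs_mul_integral_rpow_sub_one_mul_le hσ.1 hσ.2 hε (hεu.trans (min_le_left _ _))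
          (hεu.trans (min_le_right _ _)) hgη hg
    _ < η := by linarith

theorem tendsto_mul_integral_rpow_sub_one_mul {M : ℝ} (hδ : 0 < δ)
    (hgM : Tendsto g (𝓝[>] 0) (𝓝 M)) (hg : LocallyIntegrableOn g (Ioi 0)) :
    Tendsto (fun σ => σ * ∫ t in Ioo 0 δ, t ^ (σ - 1) * g t) (𝓝[>] 0) (𝓝 M) := by
  have hvanish := tendsto_mul_integral_rpow_sub_one_mul_of_tendsto_zero hδ
    (tendsto_sub_nhds_zero_iff.2 hgM) (hg.sub (locallyIntegrableOn_const M))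
  have hpow : Tendsto (fun σ : ℝ => M * δ ^ σ) (𝓝[>] 0) (𝓝 M) := by
    simpa using ((Real.continuous_const_rpow hδ.ne').tendsto 0).mono_left nhdsWithin_le_nhds
      |>.const_mul M
  obtain ⟨ε, hε, hsub⟩ := mem_nhdsGT_iff_exists_Ioo_subset.1
    (hgM.abs (Iic_mem_nhds (lt_add_one |M|)))
  have hsum := hvanish.add hpow
  rw [zero_add] at hsum
  refine hsum.congr' ?_
  filter_upwards [self_mem_nhdsWithin] with σ (hσ : 0 < σ)
  have hI := integrableOn_Ioo_rpow_sub_one_mul (δ := δ) hσ hε (fun t ht => hsub ht) hg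
  simp_rw [mul_sub]
  rw [integral_sub hI ((integrableOn_Ioo_rpow_sub_one hσ δ).mul_const M), integral_mul_const,
    integral_Ioo_rpow_sub_one hσ hδ.le]
  field_simp [hσ.ne']
  ring

end Abelian

theorem tendsto_mul_integral_rpow_mul_of_tendsto_div_rpow {f : ℝ → ℝ} {a M δ : ℝ} (hδ : 0 < δ)
    (hfM : Tendsto (fun t => f t / t ^ a) (𝓝[>] 0) (𝓝 M)) (hf : LocallyIntegrableOn f (Ioi 0)) :
    Tendsto (fun σ => σ * ∫ t in Ioo 0 δ, t ^ (σ - a - 1) * f t) (𝓝[>] 0) (𝓝 M) := by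
  have hg : LocallyIntegrableOn (fun t => f t / t ^ a) (Ioi 0) := by
    simp_rw [div_eq_mul_inv]
    refine hf.mul_continuousOn (fun t ht => ?_) isLocallyClosed_Ioi
    exact ((Real.continuousAt_rpow_const _ _ (Or.inl (ne_of_gt ht))).inv₀
      (Real.rpow_pos_of_pos ht a).ne').continuousWithinAt
  refine (tendsto_mul_integral_rpow_sub_one_mul hδ hfM hg).congr fun σ => ?_
  congr 1
  refine setIntegral_congr_fun measurableSet_Ioo fun t ht => ?_
  rw [sub_right_comm, Real.rpow_sub ht.1 (σ - 1)]
  ring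

theorem tubeZeta_residue_eq_content_general (N : ℕ)
    (A : Set (EuclideanSpace ℝ (Fin N)))
    (hbd : Bornology.IsBounded A) (D M : ℝ)
    (hmeas : Tendsto
      (fun t : ℝ => (volume (thickening t A)).toReal / t ^ ((N : ℝ) - D))
      (𝓝[>] 0) (𝓝 M))
    (δ : ℝ) (hδ : 0 < δ) :
    Tendsto (fun s : ℝ => (s - D) *
        ∫ t in Set.Ioo (0:ℝ) δ, t ^ (s - (N : ℝ) - 1) * (volume (thickening t A)).toReal)
      (𝓝[>] D) (𝓝 M) := by
  have hmono : Monotone fun t : ℝ => (volume (thickening t A)).toReal := fun _ _ hst =>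
    ENNReal.toReal_mono hbd.thickening.measure_lt_top.ne (measure_mono (thickening_mono hst A))
  have hshift : Tendsto (fun s : ℝ => s - D) (𝓝[>] D) (𝓝[>] 0) := by
    rw [Tendsto, map_subRight_nhdsGT, sub_self]
  refine ((tendsto_mul_integral_rpow_mul_of_tendsto_div_rpow hδ hmeas
    (hmono.locallyIntegrable.locallyIntegrableOn _)).comp hshift).congr fun s => ?_
  simp only [Function.comp_apply, sub_sub_sub_cancel_right]

/-- (Lapidus–Radunović–Žubrinić) If `A ⊆ ℝ^N` is a nonempty
bounded set that is Minkowski measurable of dimension `D ∈ [0,N)` with Minkowski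
content `M ∈ (0,∞)` (i.e. `|A_t|/t^{N-D} → M` as `t → 0⁺`), then for every
`δ > 0` the tube zeta function `ζ̃_A(s) = ∫_0^δ t^{s-N-1} |A_t| dt` has residue
`M` at `s = D`, in the sense that `(s-D) ζ̃_A(s) → M` as `s → D⁺` along the
reals. -/
theorem tubeZeta_residue_eq_content (N : ℕ) (hN : 1 ≤ N)
    (A : Set (EuclideanSpace ℝ (Fin N))) (hne : A.Nonempty)
    (hbd : Bornology.IsBounded A) (D M : ℝ) (hD0 : 0 ≤ D) (hDN : D < N)
    (hM : 0 < M)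
    (hmeas : Tendsto
      (fun t : ℝ => (volume (thickening t A)).toReal / t ^ ((N : ℝ) - D))
      (𝓝[>] 0) (𝓝 M))
    (δ : ℝ) (hδ : 0 < δ) :
    Tendsto (fun s : ℝ => (s - D) *
        ∫ t in Set.Ioo (0:ℝ) δ, t ^ (s - (N : ℝ) - 1) * (volume (thickening t A)).toReal)
      (𝓝[>] D) (𝓝 M) :=
  tubeZeta_residue_eq_content_general N A hbd D M hmeas δ hδ
end
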